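/- arXiv:2303.16321 — 3 statements merged into one kernel-verified Lean document; each statement's English description precedes it below -/
import Mathlib

section
/- Let S_t = σ_t(M_t) be an information state with cost distribution ρ, let Λ^∞ be the unique fixed point of 𝒯, and suppose the infimum in [𝒯Λ^∞](s, z) is attained for all s, z by a control law π*(s, z) = arg min_{u ∈ 𝒰} sup_{c ∈ 𝒞, s' ∈ 𝒮}(c + γ Λ^∞(s', γz) + ρ(c, s' | s, u)/z). Then the memory-based strategy g* with g*_t(m_t) = π*(σ_t(m_t), γ^t) is optimal: V_0^{g*}(y_0) = V_0(y_0) for every initial observation y_0 ∈ 𝒴. -/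
open Set Filter

noncomputable section

/-- Hausdorff distance built from an arbitrary distance function `η`,
`ℋ(A,B) = max{sup_{a∈A} inf_{b∈B} η a b, sup_{b∈B} inf_{a∈A} η a b}`. -/
def hausd {α : Type*} (η : α → α → ℝ) (A B : Set α) : ℝ :=
  max (sSup ((fun a => sInf ((fun b => η a b) '' B)) '' A))
      (sSup ((fun b => sInf ((fun a => η a b) '' A)) '' B))

/-- The time-invariant DP operator `𝒯` for general information states:
`[𝒯Λ](s,z) = inf_u sup_{c,s'} (c + γ·Λ(s',γz) + ρ(c,s'|s,u)/z)`, the sup being over the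
support of the cost distribution `ρ` (off the support `ρ = −∞`). -/
def DPop {Ss Uu : Type*} (γ : ℝ) (ρ : ℝ → Ss → Ss → Uu → EReal)
    (Λ : Ss → ℝ → ℝ) (s : Ss) (z : ℝ) : ℝ :=
  sInf (Set.range fun u : Uu => sSup ((fun p : ℝ × Ss =>
    p.1 + γ * Λ p.2 (γ * z) + (ρ p.1 p.2 s u).toReal / z) '' {p | ρ p.1 p.2 s u ≠ ⊥}))

/-- Iterates `Λ^n = 𝒯^n Λ^0` starting from `Λ^0 ≡ 0`. -/
def DPopIter {Ss Uu : Type*} (γ : ℝ) (ρ : ℝ → Ss → Ss → Uu → EReal) : ℕ → Ss → ℝ → ℝ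
  | 0 => fun _ _ => 0
  | (n+1) => DPop γ ρ (DPopIter γ ρ n)

/-- The law-dependent operator `𝒯(π)`. -/
def DPopLaw {Ss Uu : Type*} (γ : ℝ) (ρ : ℝ → Ss → Ss → Uu → EReal) (π : Ss → ℝ → Uu)
    (Λ : Ss → ℝ → ℝ) (s : Ss) (z : ℝ) : ℝ :=
  sSup ((fun p : ℝ × Ss =>
    p.1 + γ * Λ p.2 (γ * z) + (ρ p.1 p.2 s (π s z)).toReal / z) '' {p | ρ p.1 p.2 s (π s z) ≠ ⊥})

/-- Iterates `𝒯(π)^n Λ^0` starting from `Λ^0 ≡ 0`. -/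
def DPopLawIter {Ss Uu : Type*} (γ : ℝ) (ρ : ℝ → Ss → Ss → Uu → EReal) (π : Ss → ℝ → Uu) :
    ℕ → Ss → ℝ → ℝ
  | 0 => fun _ _ => 0
  | (n+1) => DPopLaw γ ρ π (DPopLawIter γ ρ π n)

/-- The time-invariant DP operator `𝒯̄` for problems with observable costs:
`[𝒯̄Λ̄](s̄) = inf_u sup_{(c,s̄') ∈ F(s̄,u)} (c + γ·Λ̄(s̄'))` where `F s̄ u = [[C, S̄' | s̄, u]]`. -/
def DPopB {Sb Uu : Type*} (γ : ℝ) (F : Sb → Uu → Set (ℝ × Sb)) (Λ : Sb → ℝ) (s : Sb) : ℝ :=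
  sInf (Set.range fun u : Uu => sSup ((fun p : ℝ × Sb => p.1 + γ * Λ p.2) '' F s u))

/-- Iterates `Λ̄^n = 𝒯̄^n Λ̄^0` starting from `Λ̄^0 ≡ 0`. -/
def DPopBIter {Sb Uu : Type*} (γ : ℝ) (F : Sb → Uu → Set (ℝ × Sb)) : ℕ → Sb → ℝ
  | 0 => fun _ => 0
  | (n+1) => DPopB γ F (DPopBIter γ F n)

/-- The law-dependent observable-cost operator. -/
def DPopBLaw {Sb Uu : Type*} (γ : ℝ) (F : Sb → Uu → Set (ℝ × Sb)) (π : Sb → Uu)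
    (Λ : Sb → ℝ) (s : Sb) : ℝ :=
  sSup ((fun p : ℝ × Sb => p.1 + γ * Λ p.2) '' F s (π s))

/-- `β_t(T)` error coefficients, fuel-indexed: `beta γ e k t = β_t(t+k)` with
`β_T(T) = γ^T·e` and `β_t(T) = β_{t+1}(T) + γ^t·e`. -/
def beta (γ e : ℝ) : ℕ → ℕ → ℝ
  | 0, t => γ ^ t * e
  | (k+1), t => beta γ e k (t+1) + γ ^ t * e

/-- A partially observed non-stochastic input–output system with bounded costs:
disturbances `W_t ∈ 𝒲`, actions `U_t ∈ 𝒰`, observations `Y_0 = h_0(W_0)`,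
`Y_{t+1} = h_{t+1}(W_{0:t}, U_{0:t})`, and costs `C_t = d_t(W_{0:t}, U_{0:t}) ∈ 𝒞 ⊆ [cmin, cmax] ⊂ ℝ≥0`,
with a discount factor `γ ∈ (0,1)`. -/
structure Sys where
  W : Type
  U : Type
  Y : Type
  [hW : Nonempty W]
  [hU : Nonempty U]
  [hY : Nonempty Y]
  γ : ℝ
  cmin : ℝ
  cmax : ℝ
  h0 : W → Y
  h : (t : ℕ) → (Fin (t+1) → W) → (Fin (t+1) → U) → Y
  d : (t : ℕ) → (Fin (t+1) → W) → (Fin (t+1) → U) → ℝ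
  hγ0 : 0 < γ
  hγ1 : γ < 1
  hcmin : 0 ≤ cmin
  hcost : ∀ t ω υ, d t ω υ ∈ Set.Icc cmin cmax

attribute [instance] Sys.hW Sys.hU Sys.hY

namespace Sys

variable (S : Sys)

/-- `a^max = c^max/(1-γ)`. -/
def amax : ℝ := S.cmax / (1 - S.γ)

/-- Memory space at time `t`: `M_t = (Y_{0:t}, U_{0:t-1})`. -/
abbrev Mem (t : ℕ) : Type := (Fin (t+1) → S.Y) × (Fin t → S.U)

/-- Control strategies `g = (g_0, g_1, …)`, `U_t = g_t(M_t)`. -/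
abbrev Strat : Type := (t : ℕ) → S.Mem t → S.U

/-- The memory realization at time `0` generated by an initial observation `y_0`. -/
def mem0 (y : S.Y) : S.Mem 0 := (fun _ => y, Fin.elim0)

/-- Open-loop observation `Y_s` generated by disturbances `ω` and actions `u_{0:s-1}`. -/
def oy (ω : ℕ → S.W) : (s : ℕ) → (Fin s → S.U) → S.Y
  | 0, _ => S.h0 (ω 0)
  | (t+1), υ => S.h t (fun i : Fin (t+1) => ω i) υ

/-- Open-loop cost `C_t` generated by disturbances `ω` and actions `u_{0:t}`. -/
def oc (ω : ℕ → S.W) (t : ℕ) (υ : Fin (t+1) → S.U) : ℝ :=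
  S.d t (fun i : Fin (t+1) => ω i) υ

/-- Open-loop accrued cost `A_t = Σ_{ℓ<t} γ^ℓ C_ℓ`. -/
def oA (ω : ℕ → S.W) (t : ℕ) (υ : Fin t → S.U) : ℝ :=
  ∑ ℓ : Fin t, S.γ ^ (ℓ : ℕ) *
    S.oc ω ℓ (fun j : Fin ((ℓ : ℕ) + 1) => υ ⟨j, by have := j.isLt; have := ℓ.isLt; omega⟩)

/-- Open-loop memory at time `t` generated by disturbances `ω` and actions `u_{0:t-1}`. -/
def omem (ω : ℕ → S.W) (t : ℕ) (υ : Fin t → S.U) : S.Mem t :=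
  (fun i : Fin (t+1) =>
    S.oy ω i (fun j : Fin (i : ℕ) => υ ⟨j, by have := j.isLt; have := i.isLt; omega⟩), υ)

/-- Disturbance realizations consistent with the memory realization `m_t`. -/
def consistent (t : ℕ) (m : S.Mem t) : Set (ℕ → S.W) := {ω | S.omem ω t m.2 = m}

/-- `[[A_t | m_t]]`, the conditional range of the accrued cost. -/
def Arange (t : ℕ) (m : S.Mem t) : Set ℝ :=
  (fun ω => S.oA ω t m.2) '' S.consistent t m

/-- Closed-loop memory `M_t` generated by strategy `g` and disturbances `ω`. -/
def memOf (g : S.Strat) (ω : ℕ → S.W) : (t : ℕ) → S.Mem t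
  | 0 => (fun _ => S.h0 (ω 0), Fin.elim0)
  | (t+1) =>
    let m := memOf g ω t
    let us : Fin (t+1) → S.U := Fin.snoc m.2 (g t m)
    (Fin.snoc m.1 (S.h t (fun i : Fin (t+1) => ω i) us), us)

/-- Closed-loop action `U_t = g_t(M_t)`. -/
def act (g : S.Strat) (ω : ℕ → S.W) (t : ℕ) : S.U := g t (S.memOf g ω t)

/-- Closed-loop cost `C_t`. -/
def ccost (g : S.Strat) (ω : ℕ → S.W) (t : ℕ) : ℝ :=
  S.d t (fun i : Fin (t+1) => ω i) (fun i : Fin (t+1) => S.act g ω i)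

/-- Closed-loop accrued cost `A_t = Σ_{ℓ<t} γ^ℓ C_ℓ`. -/
def cA (g : S.Strat) (ω : ℕ → S.W) (t : ℕ) : ℝ :=
  ∑ ℓ ∈ Finset.range t, S.γ ^ ℓ * S.ccost g ω ℓ

/-- Closed-loop cost-to-go `C_t^∞ = Σ_{ℓ≥t} γ^{ℓ-t} C_ℓ`. -/
def cCinf (g : S.Strat) (ω : ℕ → S.W) (t : ℕ) : ℝ :=
  ∑' k : ℕ, S.γ ^ k * S.ccost g ω (t + k)

/-- Strategy value function
`V_t^g(m_t) = sup_{(a,c^∞) ∈ [[A_t, C_t^∞ | m_t]]^g} (a + γ^t c^∞)`. -/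
def V (g : S.Strat) (t : ℕ) (m : S.Mem t) : ℝ :=
  sSup ((fun ω => S.cA g ω t + S.γ ^ t * S.cCinf g ω t) '' {ω | S.memOf g ω t = m})

/-- Optimal value function `V_t(m_t) = inf_g V_t^g(m_t)`
(the infimum over strategies consistent with the realization `m_t`). -/
def Vopt (t : ℕ) (m : S.Mem t) : ℝ :=
  sInf ((fun g => S.V g t m) '' {g : S.Strat | ∃ ω, S.memOf g ω t = m})

/-- Strategy-dependent finite-horizon function, fuel-indexed:
`Jg g n t m = J_t^g(m_t; t+n)` with `J_T^g(m_T;T) = sup_{[[A_T,C_T|m_T]]^g}(a_T + γ^T c_T)` and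
`J_t^g(m_t;T) = sup_{m_{t+1} ∈ [[M_{t+1}|m_t]]^g} J_{t+1}^g(m_{t+1};T)`. -/
def Jg (g : S.Strat) : ℕ → (t : ℕ) → S.Mem t → ℝ
  | 0, t, m => sSup ((fun ω => S.cA g ω t + S.γ ^ t * S.ccost g ω t) '' {ω | S.memOf g ω t = m})
  | (n+1), t, m =>
    sSup ((fun ω => Jg g n (t+1) (S.memOf g ω (t+1))) '' {ω | S.memOf g ω t = m})

/-- Optimal finite-horizon function, fuel-indexed: `Jopt n t m = J_t(m_t; t+n)` with
`J_T(m_T;T) = inf_{u_T} sup_{[[A_T,C_T|m_T,u_T]]}(a_T + γ^T c_T)` and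
`J_t(m_t;T) = inf_{u_t} sup_{m_{t+1} ∈ [[M_{t+1}|m_t,u_t]]} J_{t+1}(m_{t+1};T)`. -/
def Jopt : ℕ → (t : ℕ) → S.Mem t → ℝ
  | 0, t, m => sInf (Set.range fun u : S.U =>
      sSup ((fun ω => S.oA ω t m.2 + S.γ ^ t * S.oc ω t (Fin.snoc m.2 u)) '' S.consistent t m))
  | (n+1), t, m => sInf (Set.range fun u : S.U =>
      sSup ((fun ω => Jopt n (t+1) (S.omem ω (t+1) (Fin.snoc m.2 u))) '' S.consistent t m))

/-- The conditional accrued distribution `r_t((c,s) | m_t, u_t)` of the pair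
`(C_t, S_{t+1})` where `S_{t+1} = σ_{t+1}(M_{t+1})`:
`r_t(x|y) = sup_{a ∈ [0,a^max]}(a + 𝕀(x,a|y)) − sup_{a ∈ [0,a^max]}(a + 𝕀(a|y))` in `ℝ ∪ {−∞}`. -/
def rcs {Ss : Type*} (σ : (t : ℕ) → S.Mem t → Ss) (t : ℕ) (c : ℝ) (s : Ss)
    (m : S.Mem t) (u : S.U) : EReal :=
  sSup ((fun a : ℝ => (a : EReal)) '' {a | a ∈ Set.Icc 0 S.amax ∧ ∃ ω ∈ S.consistent t m,
      S.oc ω t (Fin.snoc m.2 u) = c ∧ σ (t+1) (S.omem ω (t+1) (Fin.snoc m.2 u)) = s ∧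
      S.oA ω t m.2 = a}) -
  sSup ((fun a : ℝ => (a : EReal)) '' {a | a ∈ Set.Icc 0 S.amax ∧ ∃ ω ∈ S.consistent t m,
      S.oA ω t m.2 = a})

/-! ### Observable costs -/

/-- Memory space with observable costs: `M_t = (Y_{0:t}, C_{0:t-1}, U_{0:t-1})`. -/
abbrev MemO (t : ℕ) : Type := (Fin (t+1) → S.Y) × (Fin t → ℝ) × (Fin t → S.U)

/-- Strategies for the observable-cost problem. -/
abbrev StratO : Type := (t : ℕ) → S.MemO t → S.U

/-- The observable-cost memory realization at time `0` from an initial observation. -/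
def memO0 (y : S.Y) : S.MemO 0 := (fun _ => y, Fin.elim0, Fin.elim0)

/-- Open-loop observable-cost memory generated by `ω` and actions `u_{0:t-1}`. -/
def omemO (ω : ℕ → S.W) (t : ℕ) (υ : Fin t → S.U) : S.MemO t :=
  (fun i : Fin (t+1) =>
      S.oy ω i (fun j : Fin (i : ℕ) => υ ⟨j, by have := j.isLt; have := i.isLt; omega⟩),
   fun ℓ : Fin t =>
      S.oc ω ℓ (fun j : Fin ((ℓ : ℕ) + 1) => υ ⟨j, by have := j.isLt; have := ℓ.isLt; omega⟩),
   υ)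

/-- Disturbances consistent with an observable-cost memory realization. -/
def consistentO (t : ℕ) (m : S.MemO t) : Set (ℕ → S.W) := {ω | S.omemO ω t m.2.2 = m}

/-- `[[A_t | m_t]]` for the observable-cost problem. -/
def ArangeO (t : ℕ) (m : S.MemO t) : Set ℝ :=
  (fun ω => S.oA ω t m.2.2) '' S.consistentO t m

/-- Closed-loop observable-cost memory. -/
def memOfO (g : S.StratO) (ω : ℕ → S.W) : (t : ℕ) → S.MemO t
  | 0 => (fun _ => S.h0 (ω 0), Fin.elim0, Fin.elim0)
  | (t+1) =>
    let m := memOfO g ω t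
    let us : Fin (t+1) → S.U := Fin.snoc m.2.2 (g t m)
    (Fin.snoc m.1 (S.h t (fun i : Fin (t+1) => ω i) us),
     Fin.snoc m.2.1 (S.d t (fun i : Fin (t+1) => ω i) us), us)

/-- Closed-loop action for the observable-cost problem. -/
def actO (g : S.StratO) (ω : ℕ → S.W) (t : ℕ) : S.U := g t (S.memOfO g ω t)

/-- Closed-loop cost for the observable-cost problem. -/
def ccostO (g : S.StratO) (ω : ℕ → S.W) (t : ℕ) : ℝ :=
  S.d t (fun i : Fin (t+1) => ω i) (fun i : Fin (t+1) => S.actO g ω i)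

/-- Closed-loop accrued cost for the observable-cost problem. -/
def cAO (g : S.StratO) (ω : ℕ → S.W) (t : ℕ) : ℝ :=
  ∑ ℓ ∈ Finset.range t, S.γ ^ ℓ * S.ccostO g ω ℓ

/-- Closed-loop cost-to-go for the observable-cost problem. -/
def cCinfO (g : S.StratO) (ω : ℕ → S.W) (t : ℕ) : ℝ :=
  ∑' k : ℕ, S.γ ^ k * S.ccostO g ω (t + k)

/-- Strategy value function for the observable-cost problem. -/
def VO (g : S.StratO) (t : ℕ) (m : S.MemO t) : ℝ :=
  sSup ((fun ω => S.cAO g ω t + S.γ ^ t * S.cCinfO g ω t) '' {ω | S.memOfO g ω t = m})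

/-- Optimal value function for the observable-cost problem. -/
def VoptO (t : ℕ) (m : S.MemO t) : ℝ :=
  sInf ((fun g => S.VO g t m) '' {g : S.StratO | ∃ ω, S.memOfO g ω t = m})

/-- Optimal finite-horizon function for the observable-cost problem, fuel-indexed. -/
def JoptO : ℕ → (t : ℕ) → S.MemO t → ℝ
  | 0, t, m => sInf (Set.range fun u : S.U =>
      sSup ((fun ω => S.oA ω t m.2.2 + S.γ ^ t * S.oc ω t (Fin.snoc m.2.2 u)) ''
        S.consistentO t m))
  | (n+1), t, m => sInf (Set.range fun u : S.U =>
      sSup ((fun ω => JoptO n (t+1) (S.omemO ω (t+1) (Fin.snoc m.2.2 u))) '' S.consistentO t m))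

/-- `[[C_t, S̄_{t+1} | m_t, u_t]]`: conditional range of the current cost and next
(information-) state `S̄_{t+1} = σ̄_{t+1}(M_{t+1})` given the memory `m_t` and action `u_t`. -/
def CSrange {Sb : Type*} (σ : (t : ℕ) → S.MemO t → Sb) (t : ℕ) (m : S.MemO t) (u : S.U) :
    Set (ℝ × Sb) :=
  (fun ω => (S.oc ω t (Fin.snoc m.2.2 u), σ (t+1) (S.omemO ω (t+1) (Fin.snoc m.2.2 u)))) ''
    S.consistentO t m

/-- `[[C_t, Y_{t+1} | m_t, u_t]]`. -/
def CYrange (t : ℕ) (m : S.MemO t) (u : S.U) : Set (ℝ × S.Y) :=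
  (fun ω => (S.oc ω t (Fin.snoc m.2.2 u), S.oy ω (t+1) (Fin.snoc m.2.2 u))) '' S.consistentO t m

open Classical in
/-- Conditional indicator `𝕀((c_t, m_{t+1}) | m_t, u_t)` for the observable-cost problem. -/
def indObs (t : ℕ) (c : ℝ) (m' : S.MemO (t+1)) (m : S.MemO t) (u : S.U) : EReal :=
  if ∃ ω ∈ S.consistentO t m,
      S.oc ω t (Fin.snoc m.2.2 u) = c ∧ S.omemO ω (t+1) (Fin.snoc m.2.2 u) = m' then 0 else ⊥

/-- Conditional accrued distribution `r_t((c_t, m_{t+1}) | m_t, u_t)` for the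
observable-cost problem. -/
def rObs (t : ℕ) (c : ℝ) (m' : S.MemO (t+1)) (m : S.MemO t) (u : S.U) : EReal :=
  sSup ((fun a : ℝ => (a : EReal)) '' {a | a ∈ Set.Icc 0 S.amax ∧ ∃ ω ∈ S.consistentO t m,
      S.oc ω t (Fin.snoc m.2.2 u) = c ∧ S.omemO ω (t+1) (Fin.snoc m.2.2 u) = m' ∧
      S.oA ω t m.2.2 = a}) -
  sSup ((fun a : ℝ => (a : EReal)) '' {a | a ∈ Set.Icc 0 S.amax ∧ ∃ ω ∈ S.consistentO t m,
      S.oA ω t m.2.2 = a})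

end Sys

section AuxNS

variable {S : Sys}

lemma NScmax_nonneg (S : Sys) : 0 ≤ S.cmax := by
  obtain ⟨w⟩ := S.hW; obtain ⟨u⟩ := S.hU
  have h := S.hcost 0 (fun _ => w) (fun _ => u)
  exact le_trans S.hcmin (le_trans h.1 h.2)

lemma NSsub_pos (S : Sys) : 0 < 1 - S.γ := by linarith [S.hγ1]

lemma NSamax_nonneg (S : Sys) : 0 ≤ S.amax :=
  div_nonneg (NScmax_nonneg S) (NSsub_pos S).le

lemma NSgeom_le (S : Sys) (t : ℕ) : ∑ ℓ ∈ Finset.range t, S.γ ^ ℓ ≤ (1 - S.γ)⁻¹ := by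
  have h := Summable.sum_le_tsum (Finset.range t) (fun i _ => pow_nonneg S.hγ0.le i)
    (summable_geometric_of_lt_one S.hγ0.le S.hγ1)
  rwa [tsum_geometric_of_lt_one S.hγ0.le S.hγ1] at h

lemma NSoc_mem (ω : ℕ → S.W) (t : ℕ) (υ : Fin (t+1) → S.U) :
    S.oc ω t υ ∈ Set.Icc S.cmin S.cmax := S.hcost t _ υ

lemma NSoA_nonneg (ω : ℕ → S.W) (t : ℕ) (υ : Fin t → S.U) : 0 ≤ S.oA ω t υ :=
  Finset.sum_nonneg fun ℓ _ => mul_nonneg (pow_nonneg S.hγ0.le _)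
    (le_trans S.hcmin (NSoc_mem ω ℓ _).1)

lemma NSoA_le (ω : ℕ → S.W) (t : ℕ) (υ : Fin t → S.U) : S.oA ω t υ ≤ S.amax := by
  have h1 : S.oA ω t υ ≤ ∑ ℓ : Fin t, S.γ ^ (ℓ : ℕ) * S.cmax :=
    Finset.sum_le_sum fun ℓ _ => mul_le_mul_of_nonneg_left (NSoc_mem ω ℓ _).2
      (pow_nonneg S.hγ0.le _)
  have h2 : ∑ ℓ : Fin t, S.γ ^ (ℓ : ℕ) * S.cmax = (∑ ℓ ∈ Finset.range t, S.γ ^ ℓ) * S.cmax := by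
    rw [Finset.sum_mul]
    exact Fin.sum_univ_eq_sum_range (fun i => S.γ ^ i * S.cmax) t
  calc S.oA ω t υ ≤ (∑ ℓ ∈ Finset.range t, S.γ ^ ℓ) * S.cmax := by rw [← h2]; exact h1
    _ ≤ (1 - S.γ)⁻¹ * S.cmax :=
        mul_le_mul_of_nonneg_right (NSgeom_le S t) (NScmax_nonneg S)
    _ = S.amax := by rw [Sys.amax, div_eq_mul_inv, mul_comm]

lemma NSmemOf_succ_def (g : S.Strat) (ω : ℕ → S.W) (t : ℕ) :
    S.memOf g ω (t+1) =
      (Fin.snoc (S.memOf g ω t).1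
        (S.h t (fun i : Fin (t+1) => ω i)
          (Fin.snoc (S.memOf g ω t).2 (g t (S.memOf g ω t)))),
       Fin.snoc (S.memOf g ω t).2 (g t (S.memOf g ω t))) := rfl

lemma NSmemOf_snd (g : S.Strat) (ω : ℕ → S.W) :
    ∀ (t : ℕ) (i : Fin t), (S.memOf g ω t).2 i = S.act g ω i := by
  intro t
  induction t with
  | zero => exact fun i => i.elim0
  | succ t ih =>
    intro i
    rw [NSmemOf_succ_def]
    refine Fin.lastCases ?_ ?_ i
    · show (Fin.snoc (S.memOf g ω t).2 (g t (S.memOf g ω t)) : Fin (t+1) → S.U)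
        (Fin.last t) = _
      rw [Fin.snoc_last]; rfl
    · intro j
      show (Fin.snoc (S.memOf g ω t).2 (g t (S.memOf g ω t)) : Fin (t+1) → S.U)
        (Fin.castSucc j) = _
      rw [Fin.snoc_castSucc]; exact ih j

lemma NSmemOf_fst (g : S.Strat) (ω : ℕ → S.W) :
    ∀ (t : ℕ) (i : Fin (t+1)),
      (S.memOf g ω t).1 i = S.oy ω i (fun j : Fin (i : ℕ) => S.act g ω j) := by
  intro t
  induction t with
  | zero =>
    intro i
    rw [show i = 0 from Subsingleton.elim (α := Fin 1) i 0]
    rfl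
  | succ t ih =>
    intro i
    have h2 : (Fin.snoc (S.memOf g ω t).2 (g t (S.memOf g ω t)) : Fin (t+1) → S.U)
        = fun j : Fin (t+1) => S.act g ω j := funext fun j => NSmemOf_snd g ω (t+1) j
    rw [NSmemOf_succ_def]
    refine Fin.lastCases ?_ ?_ i
    · show (Fin.snoc (S.memOf g ω t).1
          (S.h t (fun i : Fin (t+1) => ω i)
            (Fin.snoc (S.memOf g ω t).2 (g t (S.memOf g ω t)))) : Fin (t+2) → S.Y)
          (Fin.last (t+1)) = _
      rw [Fin.snoc_last, h2]
      rfl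
    · intro j
      show (Fin.snoc (S.memOf g ω t).1
          (S.h t (fun i : Fin (t+1) => ω i)
            (Fin.snoc (S.memOf g ω t).2 (g t (S.memOf g ω t)))) : Fin (t+2) → S.Y)
          (Fin.castSucc j) = _
      rw [Fin.snoc_castSucc]
      exact ih j

lemma NSomem_memOf (g : S.Strat) (ω : ℕ → S.W) (t : ℕ) :
    S.omem ω t (S.memOf g ω t).2 = S.memOf g ω t := by
  refine Prod.ext ?_ rfl
  funext i
  show S.oy ω i _ = _
  rw [NSmemOf_fst g ω t i]
  congr 1
  funext j
  exact NSmemOf_snd g ω t _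

lemma NSmem_consistent (g : S.Strat) (ω : ℕ → S.W) (t : ℕ) :
    ω ∈ S.consistent t (S.memOf g ω t) := NSomem_memOf g ω t

lemma NSmemOf_succ (g : S.Strat) (ω : ℕ → S.W) (t : ℕ) :
    S.memOf g ω (t+1)
      = S.omem ω (t+1) (Fin.snoc (S.memOf g ω t).2 (g t (S.memOf g ω t))) := by
  have h : (S.memOf g ω (t+1)).2 = Fin.snoc (S.memOf g ω t).2 (g t (S.memOf g ω t)) := rfl
  rw [← h, NSomem_memOf]

lemma NSccost_oc (g : S.Strat) (ω : ℕ → S.W) (t : ℕ) :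
    S.ccost g ω t = S.oc ω t (Fin.snoc (S.memOf g ω t).2 (g t (S.memOf g ω t))) := by
  show S.d t _ _ = S.d t _ _
  congr 1
  funext i
  exact (NSmemOf_snd g ω (t+1) i).symm

lemma NScA_oA (g : S.Strat) (ω : ℕ → S.W) (t : ℕ) :
    S.cA g ω t = S.oA ω t (S.memOf g ω t).2 := by
  rw [Sys.cA, Sys.oA, ← Fin.sum_univ_eq_sum_range]
  refine Finset.sum_congr rfl fun ℓ _ => ?_
  congr 1
  show S.d ℓ _ _ = S.d ℓ _ _
  congr 1
  funext j
  rw [NSmemOf_snd g ω t]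

end AuxNS

section AuxNS2

variable {S : Sys}

lemma NSoy_succ (ω : ℕ → S.W) (t : ℕ) (υ : Fin (t+1) → S.U) :
    S.oy ω (t+1) υ = S.h t (fun i : Fin (t+1) => ω i) υ := rfl

lemma NSomem_fst_eval (ω : ℕ → S.W) (t : ℕ) (υ : Fin t → S.U) (i : Fin (t+1)) :
    (S.omem ω t υ).1 i = S.oy ω i
      (fun j : Fin (i : ℕ) => υ ⟨j, lt_of_lt_of_le j.isLt (Nat.lt_succ_iff.mp i.isLt)⟩) := rfl

lemma NSconsist_closed (g : S.Strat) (ω ω' : ℕ → S.W) :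
    ∀ (t : ℕ) (m : S.Mem t), S.memOf g ω t = m → S.omem ω' t m.2 = m →
      S.memOf g ω' t = m := by
  intro t
  induction t with
  | zero =>
    intro m h1 h2
    refine Prod.ext ?_ (funext fun j => j.elim0)
    funext i
    rw [show i = 0 from Subsingleton.elim (α := Fin 1) i 0]
    exact congrFun (congrArg Prod.fst h2) 0
  | succ t ih =>
    intro m h1 h2
    have hm2 : m.2 = Fin.snoc (S.memOf g ω t).2 (g t (S.memOf g ω t)) := by
      rw [← h1, NSmemOf_succ_def]
    have hfst : ∀ i : Fin (t+1), m.1 (Fin.castSucc i) = (S.memOf g ω t).1 i := by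
      intro i
      rw [← h1, NSmemOf_succ_def]
      show (Fin.snoc (S.memOf g ω t).1
        (S.h t (fun i : Fin (t+1) => ω i)
          (Fin.snoc (S.memOf g ω t).2 (g t (S.memOf g ω t)))) : Fin (t+2) → S.Y)
          (Fin.castSucc i) = _
      exact Fin.snoc_castSucc _ _ _
    have hm1last : m.1 (Fin.last (t+1)) = S.h t (fun i : Fin (t+1) => ω' i) m.2 := by
      have e := congrFun (congrArg Prod.fst h2) (Fin.last (t+1))
      rw [NSomem_fst_eval] at e
      rw [← e]
      show S.oy ω' (t+1) _ = S.h t _ _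
      rw [NSoy_succ]
      congr 1
    have hpre : S.omem ω' t (S.memOf g ω t).2 = S.memOf g ω t := by
      refine Prod.ext ?_ rfl
      funext i
      rw [NSomem_fst_eval]
      have e := congrFun (congrArg Prod.fst h2) (Fin.castSucc i)
      rw [NSomem_fst_eval] at e
      have hfun : (fun j : Fin ((Fin.castSucc i : Fin (t+2)) : ℕ) =>
          m.2 ⟨j, lt_of_lt_of_le j.isLt (Nat.lt_succ_iff.mp (Fin.castSucc i).isLt)⟩)
          = fun j : Fin (i : ℕ) => (S.memOf g ω t).2
              ⟨j, lt_of_lt_of_le j.isLt (Nat.lt_succ_iff.mp i.isLt)⟩ := by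
        funext j
        rw [hm2]
        have hcast : (⟨(j : ℕ), lt_of_lt_of_le j.isLt (Nat.lt_succ_iff.mp
            (Fin.castSucc i).isLt)⟩ : Fin (t+1))
            = Fin.castSucc ⟨(j : ℕ), lt_of_lt_of_le j.isLt (Nat.lt_succ_iff.mp i.isLt)⟩ :=
          Fin.ext rfl
        rw [hcast, Fin.snoc_castSucc]
      rw [hfun] at e
      exact e.trans (hfst i)
    have ihm := ih (S.memOf g ω t) rfl hpre
    have hsnd' : (S.memOf g ω' (t+1)).2 = m.2 := by
      show Fin.snoc (S.memOf g ω' t).2 (g t (S.memOf g ω' t)) = m.2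
      rw [ihm, ← hm2]
    have hlastfst : (S.memOf g ω' (t+1)).1 (Fin.last (t+1)) = m.1 (Fin.last (t+1)) := by
      show (Fin.snoc (S.memOf g ω' t).1
        (S.h t (fun i : Fin (t+1) => ω' i)
          (Fin.snoc (S.memOf g ω' t).2 (g t (S.memOf g ω' t)))) : Fin (t+2) → S.Y)
          (Fin.last (t+1)) = _
      rw [Fin.snoc_last,
        show (Fin.snoc (S.memOf g ω' t).2 (g t (S.memOf g ω' t)) : Fin (t+1) → S.U) = m.2
          from hsnd', hm1last]
    have hcastfst : ∀ i : Fin (t+1),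
        (S.memOf g ω' (t+1)).1 (Fin.castSucc i) = m.1 (Fin.castSucc i) := by
      intro i
      show (Fin.snoc (S.memOf g ω' t).1 _ : Fin (t+2) → S.Y) (Fin.castSucc i) = _
      rw [Fin.snoc_castSucc, ihm, hfst]
    exact Prod.ext (funext fun i => Fin.lastCases hlastfst hcastfst i) hsnd'

lemma NSmemOf_zero_iff (g : S.Strat) (ω : ℕ → S.W) (y0 : S.Y) :
    S.memOf g ω 0 = S.mem0 y0 ↔ S.h0 (ω 0) = y0 := by
  constructor
  · intro h
    exact congrFun (congrArg Prod.fst h) 0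
  · intro h
    exact Prod.ext (funext fun i => h) (funext fun j => j.elim0)

lemma NSconsistent_zero_iff (ω : ℕ → S.W) (y0 : S.Y) :
    ω ∈ S.consistent 0 (S.mem0 y0) ↔ S.h0 (ω 0) = y0 := by
  constructor
  · intro h
    exact congrFun (congrArg Prod.fst h) 0
  · intro h
    refine Prod.ext (funext fun i => ?_) (funext fun j => j.elim0)
    rw [show i = 0 from Subsingleton.elim (α := Fin 1) i 0]
    exact h

lemma NSmemOf_fst_zero (g : S.Strat) (ω : ℕ → S.W) (t : ℕ) :
    (S.memOf g ω t).1 ⟨0, t.succ_pos⟩ = S.h0 (ω 0) :=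
  NSmemOf_fst g ω t ⟨0, t.succ_pos⟩

lemma NSomem_fst_zero (ω : ℕ → S.W) (t : ℕ) (υ : Fin t → S.U) :
    (S.omem ω t υ).1 ⟨0, t.succ_pos⟩ = S.h0 (ω 0) := rfl

end AuxNS2

section AuxNS3

variable {S : Sys}

lemma NSccost_mem (g : S.Strat) (ω : ℕ → S.W) (t : ℕ) :
    S.ccost g ω t ∈ Set.Icc S.cmin S.cmax := S.hcost t _ _

lemma NSsummable (g : S.Strat) (ω : ℕ → S.W) (t : ℕ) :
    Summable (fun k => S.γ ^ k * S.ccost g ω (t + k)) := by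
  refine Summable.of_nonneg_of_le
    (fun k => mul_nonneg (pow_nonneg S.hγ0.le k)
      (le_trans S.hcmin (NSccost_mem g ω (t+k)).1))
    (fun k => ?_) ((summable_geometric_of_lt_one S.hγ0.le S.hγ1).mul_left S.cmax)
  rw [mul_comm]
  exact mul_le_mul_of_nonneg_right (NSccost_mem g ω (t+k)).2 (pow_nonneg S.hγ0.le k)

lemma NScCinf_nonneg (g : S.Strat) (ω : ℕ → S.W) (t : ℕ) : 0 ≤ S.cCinf g ω t :=
  tsum_nonneg fun k => mul_nonneg (pow_nonneg S.hγ0.le k)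
    (le_trans S.hcmin (NSccost_mem g ω (t+k)).1)

lemma NScCinf_le (g : S.Strat) (ω : ℕ → S.W) (t : ℕ) : S.cCinf g ω t ≤ S.amax := by
  have h1 : S.cCinf g ω t ≤ ∑' k : ℕ, S.cmax * S.γ ^ k := by
    refine Summable.tsum_le_tsum (fun k => ?_) (NSsummable g ω t)
      ((summable_geometric_of_lt_one S.hγ0.le S.hγ1).mul_left S.cmax)
    rw [mul_comm]
    exact mul_le_mul_of_nonneg_right (NSccost_mem g ω (t+k)).2 (pow_nonneg S.hγ0.le k)
  rw [tsum_mul_left, tsum_geometric_of_lt_one S.hγ0.le S.hγ1] at h1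
  calc S.cCinf g ω t ≤ S.cmax * (1 - S.γ)⁻¹ := h1
    _ = S.amax := by rw [Sys.amax, div_eq_mul_inv]

lemma NScA_nonneg (g : S.Strat) (ω : ℕ → S.W) (t : ℕ) : 0 ≤ S.cA g ω t :=
  Finset.sum_nonneg fun ℓ _ => mul_nonneg (pow_nonneg S.hγ0.le ℓ)
    (le_trans S.hcmin (NSccost_mem g ω ℓ).1)

lemma NScA_le (g : S.Strat) (ω : ℕ → S.W) (t : ℕ) : S.cA g ω t ≤ S.amax := by
  rw [NScA_oA]; exact NSoA_le ω t _

lemma NScCinf_decomp (g : S.Strat) (ω : ℕ → S.W) (T : ℕ) :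
    S.cCinf g ω 0 = S.cA g ω T + S.γ ^ T * S.cCinf g ω T := by
  have hs : Summable (fun k => S.γ ^ k * S.ccost g ω k) := by
    simpa using NSsummable g ω 0
  have h1 := Summable.sum_add_tsum_nat_add (f := fun k => S.γ ^ k * S.ccost g ω k) T hs
  have h2 : S.cCinf g ω 0 = ∑' k : ℕ, S.γ ^ k * S.ccost g ω k := by
    rw [Sys.cCinf]; congr 1; funext k; rw [Nat.zero_add]
  have h3 : (∑' k : ℕ, S.γ ^ (k + T) * S.ccost g ω (k + T))
      = S.γ ^ T * S.cCinf g ω T := by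
    rw [Sys.cCinf, ← tsum_mul_left]
    congr 1
    funext k
    rw [pow_add, Nat.add_comm T k]
    ring
  rw [h2, ← h1, ← h3]
  rfl

lemma NSsSup_coe_image {A : Set ℝ} (hne : A.Nonempty) (hbd : BddAbove A) :
    sSup ((fun a : ℝ => (a : EReal)) '' A) = ((sSup A : ℝ) : EReal) := by
  refine le_antisymm (sSup_le ?_) ?_
  · rintro x ⟨a, ha, rfl⟩
    exact EReal.coe_le_coe_iff.2 (le_csSup hbd ha)
  · rw [le_sSup_iff]
    intro b hb
    induction b with
    | bot =>
      obtain ⟨a, ha⟩ := hne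
      exact absurd (hb ⟨a, ha, rfl⟩) (by simp)
    | coe r =>
      exact EReal.coe_le_coe_iff.2 (csSup_le hne fun a ha =>
        EReal.coe_le_coe_iff.1 (hb ⟨a, ha, rfl⟩))
    | top => exact le_top

end AuxNS3

section AuxNS4

variable {S : Sys}

/-- Realizations consistent with `m` producing cost `c` and next info-state `s'`. -/
def NSrestr (S : Sys) {Ss : Type} (σ : (t : ℕ) → S.Mem t → Ss) (t : ℕ) (m : S.Mem t)
    (u : S.U) (c : ℝ) (s' : Ss) : Set (ℕ → S.W) :=
  {ω | ω ∈ S.consistent t m ∧ S.oc ω t (Fin.snoc m.2 u) = c ∧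
    σ (t+1) (S.omem ω (t+1) (Fin.snoc m.2 u)) = s'}

def NSAbar (S : Sys) (t : ℕ) (m : S.Mem t) : ℝ :=
  sSup ((fun ω => S.oA ω t m.2) '' S.consistent t m)

def NSR (S : Sys) {Ss : Type} (σ : (t : ℕ) → S.Mem t → Ss) (t : ℕ) (m : S.Mem t)
    (u : S.U) (c : ℝ) (s' : Ss) : ℝ :=
  sSup ((fun ω => S.oA ω t m.2) '' NSrestr S σ t m u c s')

lemma NSset_eq1 {Ss : Type} (σ : (t : ℕ) → S.Mem t → Ss) (t : ℕ) (m : S.Mem t)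
    (u : S.U) (c : ℝ) (s' : Ss) :
    {a | a ∈ Set.Icc 0 S.amax ∧ ∃ ω ∈ S.consistent t m,
        S.oc ω t (Fin.snoc m.2 u) = c ∧
        σ (t+1) (S.omem ω (t+1) (Fin.snoc m.2 u)) = s' ∧ S.oA ω t m.2 = a}
      = (fun ω => S.oA ω t m.2) '' NSrestr S σ t m u c s' := by
  ext a
  constructor
  · rintro ⟨-, ω, hω, hc, hs, ha⟩
    exact ⟨ω, ⟨hω, hc, hs⟩, ha⟩
  · rintro ⟨ω, ⟨hω, hc, hs⟩, rfl⟩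
    exact ⟨⟨NSoA_nonneg ω t m.2, NSoA_le ω t m.2⟩, ω, hω, hc, hs, rfl⟩

lemma NSset_eq2 (t : ℕ) (m : S.Mem t) :
    {a | a ∈ Set.Icc 0 S.amax ∧ ∃ ω ∈ S.consistent t m, S.oA ω t m.2 = a}
      = (fun ω => S.oA ω t m.2) '' S.consistent t m := by
  ext a
  constructor
  · rintro ⟨-, ω, hω, ha⟩
    exact ⟨ω, hω, ha⟩
  · rintro ⟨ω, hω, rfl⟩
    exact ⟨⟨NSoA_nonneg ω t m.2, NSoA_le ω t m.2⟩, ω, hω, rfl⟩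

lemma NSoA_bddAbove (t : ℕ) (m : S.Mem t) (K : Set (ℕ → S.W)) :
    BddAbove ((fun ω => S.oA ω t m.2) '' K) := by
  refine ⟨S.amax, ?_⟩
  rintro x ⟨ω, hω, rfl⟩
  exact NSoA_le ω t m.2

lemma NSrcs_eq {Ss : Type} (σ : (t : ℕ) → S.Mem t → Ss) (t : ℕ) (m : S.Mem t)
    (u : S.U) (c : ℝ) (s' : Ss) (hw : (NSrestr S σ t m u c s').Nonempty) :
    S.rcs σ t c s' m u = ((NSR S σ t m u c s' - NSAbar S t m : ℝ) : EReal) := by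
  rw [Sys.rcs, NSset_eq1, NSset_eq2,
    NSsSup_coe_image (hw.image _) (NSoA_bddAbove t m _),
    NSsSup_coe_image ((hw.mono fun ω hω => hω.1).image _) (NSoA_bddAbove t m _),
    ← EReal.coe_sub]
  rfl

lemma NSrcs_bot {Ss : Type} (σ : (t : ℕ) → S.Mem t → Ss) (t : ℕ) (m : S.Mem t)
    (u : S.U) (c : ℝ) (s' : Ss) (he : NSrestr S σ t m u c s' = ∅) :
    S.rcs σ t c s' m u = ⊥ := by
  rw [Sys.rcs, NSset_eq1, he]
  rw [Set.image_empty, Set.image_empty, sSup_empty]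
  exact EReal.bot_sub _

lemma NSrestr_nonempty_of_ne_bot {Ss : Type} {σ : (t : ℕ) → S.Mem t → Ss}
    {ρ : ℝ → Ss → Ss → S.U → EReal}
    (hinfo : ∀ (t : ℕ) (m : S.Mem t) (u : S.U) (c : ℝ) (s : Ss),
      S.rcs σ t c s m u = ρ c s (σ t m) u)
    {t : ℕ} {m : S.Mem t} {u : S.U} {c : ℝ} {s' : Ss}
    (h : ρ c s' (σ t m) u ≠ ⊥) : (NSrestr S σ t m u c s').Nonempty := by
  by_contra h'
  rw [Set.not_nonempty_iff_eq_empty] at h'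
  rw [← hinfo t m u c s'] at h
  exact h (NSrcs_bot σ t m u c s' h')

lemma NSrho_mem_of_consistent {Ss : Type} {σ : (t : ℕ) → S.Mem t → Ss}
    {ρ : ℝ → Ss → Ss → S.U → EReal}
    (hinfo : ∀ (t : ℕ) (m : S.Mem t) (u : S.U) (c : ℝ) (s : Ss),
      S.rcs σ t c s m u = ρ c s (σ t m) u)
    {t : ℕ} {m : S.Mem t} {ω : ℕ → S.W} (hω : ω ∈ S.consistent t m) (u : S.U) :
    ρ (S.oc ω t (Fin.snoc m.2 u)) (σ (t+1) (S.omem ω (t+1) (Fin.snoc m.2 u)))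
      (σ t m) u ≠ ⊥ := by
  rw [← hinfo, NSrcs_eq σ t m u _ _ ⟨ω, hω, rfl, rfl⟩]
  exact EReal.coe_ne_bot _

lemma NSrho_toReal {Ss : Type} {σ : (t : ℕ) → S.Mem t → Ss}
    {ρ : ℝ → Ss → Ss → S.U → EReal}
    (hinfo : ∀ (t : ℕ) (m : S.Mem t) (u : S.U) (c : ℝ) (s : Ss),
      S.rcs σ t c s m u = ρ c s (σ t m) u)
    {t : ℕ} {m : S.Mem t} {u : S.U} {c : ℝ} {s' : Ss}
    (h : ρ c s' (σ t m) u ≠ ⊥) :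
    (ρ c s' (σ t m) u).toReal = NSR S σ t m u c s' - NSAbar S t m := by
  rw [← hinfo, NSrcs_eq σ t m u c s' (NSrestr_nonempty_of_ne_bot hinfo h)]
  exact EReal.toReal_coe _

lemma NSc_bounds {Ss : Type} {σ : (t : ℕ) → S.Mem t → Ss}
    {ρ : ℝ → Ss → Ss → S.U → EReal}
    (hinfo : ∀ (t : ℕ) (m : S.Mem t) (u : S.U) (c : ℝ) (s : Ss),
      S.rcs σ t c s m u = ρ c s (σ t m) u)
    {t : ℕ} {m : S.Mem t} {u : S.U} {c : ℝ} {s' : Ss}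
    (h : ρ c s' (σ t m) u ≠ ⊥) : c ∈ Set.Icc S.cmin S.cmax := by
  obtain ⟨ω, hω, hc, -⟩ := NSrestr_nonempty_of_ne_bot hinfo h
  rw [← hc]
  exact NSoc_mem ω t _

lemma NSR_le_Abar {Ss : Type} (σ : (t : ℕ) → S.Mem t → Ss) {t : ℕ} {m : S.Mem t}
    {u : S.U} {c : ℝ} {s' : Ss} (hw : (NSrestr S σ t m u c s').Nonempty) :
    NSR S σ t m u c s' ≤ NSAbar S t m :=
  csSup_le_csSup (NSoA_bddAbove t m _) (hw.image _)
    (Set.image_mono fun ω hω => hω.1)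

lemma NSoA_le_R {Ss : Type} (σ : (t : ℕ) → S.Mem t → Ss) {t : ℕ} {m : S.Mem t}
    {u : S.U} {c : ℝ} {s' : Ss} {ω : ℕ → S.W} (hω : ω ∈ NSrestr S σ t m u c s') :
    S.oA ω t m.2 ≤ NSR S σ t m u c s' :=
  le_csSup (NSoA_bddAbove t m _) ⟨ω, hω, rfl⟩

lemma NSoA_le_Abar {t : ℕ} {m : S.Mem t} {ω : ℕ → S.W} (hω : ω ∈ S.consistent t m) :
    S.oA ω t m.2 ≤ NSAbar S t m :=
  le_csSup (NSoA_bddAbove t m _) ⟨ω, hω, rfl⟩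

lemma NSexists_near_R {Ss : Type} (σ : (t : ℕ) → S.Mem t → Ss) {t : ℕ} {m : S.Mem t}
    {u : S.U} {c : ℝ} {s' : Ss} (hw : (NSrestr S σ t m u c s').Nonempty)
    {δ : ℝ} (hδ : 0 < δ) :
    ∃ ω ∈ NSrestr S σ t m u c s', NSR S σ t m u c s' - δ < S.oA ω t m.2 := by
  obtain ⟨x, ⟨ω, hω, rfl⟩, hx⟩ := exists_lt_of_lt_csSup (hw.image _)
    (sub_lt_self _ hδ : NSR S σ t m u c s' - δ < NSR S σ t m u c s')
  exact ⟨ω, hω, hx⟩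

lemma NSexists_near_Abar {t : ℕ} {m : S.Mem t} (hm : (S.consistent t m).Nonempty)
    {δ : ℝ} (hδ : 0 < δ) :
    ∃ ω ∈ S.consistent t m, NSAbar S t m - δ < S.oA ω t m.2 := by
  obtain ⟨x, ⟨ω, hω, rfl⟩, hx⟩ := exists_lt_of_lt_csSup (hm.image _)
    (sub_lt_self _ hδ : NSAbar S t m - δ < NSAbar S t m)
  exact ⟨ω, hω, hx⟩

end AuxNS4

section AuxNS5

variable {S : Sys}

/-- The sup-set appearing in `DPop` for a fixed action. -/
def NSE (S : Sys) {Ss : Type} (ρ : ℝ → Ss → Ss → S.U → EReal) (Λinf : Ss → ℝ → ℝ)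
    (s : Ss) (z : ℝ) (u : S.U) : Set ℝ :=
  (fun p : ℝ × Ss => p.1 + S.γ * Λinf p.2 (S.γ * z) + (ρ p.1 p.2 s u).toReal / z) ''
    {p | ρ p.1 p.2 s u ≠ ⊥}

lemma NSDPop_eq {Ss : Type} (ρ : ℝ → Ss → Ss → S.U → EReal) (Λinf : Ss → ℝ → ℝ)
    (s : Ss) (z : ℝ) :
    DPop S.γ ρ Λinf s z = sInf (Set.range fun u : S.U => sSup (NSE S ρ Λinf s z u)) := rfl

lemma NSDPopLaw_eq {Ss : Type} (ρ : ℝ → Ss → Ss → S.U → EReal) (π : Ss → ℝ → S.U)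
    (Λinf : Ss → ℝ → ℝ) (s : Ss) (z : ℝ) :
    DPopLaw S.γ ρ π Λinf s z = sSup (NSE S ρ Λinf s z (π s z)) := rfl

lemma NSz_mem (t : ℕ) : S.γ ^ t ∈ Set.Ioc (0:ℝ) 1 :=
  ⟨pow_pos S.hγ0 t, pow_le_one₀ S.hγ0.le S.hγ1.le⟩

lemma NSγz_mem {z : ℝ} (hz : z ∈ Set.Ioc (0:ℝ) 1) : S.γ * z ∈ Set.Ioc (0:ℝ) 1 :=
  ⟨mul_pos S.hγ0 hz.1, mul_le_one₀ S.hγ1.le hz.1.le hz.2⟩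

lemma NSrho_toReal_nonpos {Ss : Type} {ρ : ℝ → Ss → Ss → S.U → EReal}
    (hρ : ∀ c s' s u, ρ c s' s u = ⊥ ∨
      ∃ x : ℝ, ρ c s' s u = (x : EReal) ∧ x ∈ Set.Icc (-S.amax) 0)
    {c : ℝ} {s' s : Ss} {u : S.U} (hp : ρ c s' s u ≠ ⊥) :
    (ρ c s' s u).toReal ∈ Set.Icc (-S.amax) 0 := by
  rcases hρ c s' s u with h | ⟨x, hx, hmem⟩
  · exact absurd h hp
  · rw [hx, EReal.toReal_coe]; exact hmem

lemma NSE_bddAbove {Ss : Type} {σ : (t : ℕ) → S.Mem t → Ss}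
    {ρ : ℝ → Ss → Ss → S.U → EReal}
    (hρ : ∀ c s' s u, ρ c s' s u = ⊥ ∨
      ∃ x : ℝ, ρ c s' s u = (x : EReal) ∧ x ∈ Set.Icc (-S.amax) 0)
    (hinfo : ∀ (t : ℕ) (m : S.Mem t) (u : S.U) (c : ℝ) (s : Ss),
      S.rcs σ t c s m u = ρ c s (σ t m) u)
    {Λinf : Ss → ℝ → ℝ} {B : ℝ}
    (hB : ∀ s, ∀ z ∈ Set.Ioc (0:ℝ) 1, |Λinf s z| ≤ B)
    (t : ℕ) (m : S.Mem t) {z : ℝ} (hz : z ∈ Set.Ioc (0:ℝ) 1) (u : S.U) :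
    ∀ x ∈ NSE S ρ Λinf (σ t m) z u, x ≤ S.cmax + S.γ * B := by
  rintro x ⟨p, hp, rfl⟩
  have hc := (NSc_bounds hinfo hp).2
  have hΛ := (abs_le.1 (hB p.2 (S.γ * z) (NSγz_mem hz))).2
  have hγΛ : S.γ * Λinf p.2 (S.γ * z) ≤ S.γ * B :=
    mul_le_mul_of_nonneg_left hΛ S.hγ0.le
  have hr := (NSrho_toReal_nonpos hρ hp).2
  have hdiv : (ρ p.1 p.2 (σ t m) u).toReal / z ≤ 0 := by
    rw [div_eq_mul_inv]
    exact mul_nonpos_of_nonpos_of_nonneg hr (inv_nonneg.2 hz.1.le)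
  linarith

lemma NSE_lower_elt {Ss : Type} {σ : (t : ℕ) → S.Mem t → Ss}
    {ρ : ℝ → Ss → Ss → S.U → EReal}
    (hρ : ∀ c s' s u, ρ c s' s u = ⊥ ∨
      ∃ x : ℝ, ρ c s' s u = (x : EReal) ∧ x ∈ Set.Icc (-S.amax) 0)
    (hinfo : ∀ (t : ℕ) (m : S.Mem t) (u : S.U) (c : ℝ) (s : Ss),
      S.rcs σ t c s m u = ρ c s (σ t m) u)
    {Λinf : Ss → ℝ → ℝ} {B : ℝ}
    (hB : ∀ s, ∀ z ∈ Set.Ioc (0:ℝ) 1, |Λinf s z| ≤ B)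
    {t : ℕ} {m : S.Mem t} {ω : ℕ → S.W} (hω : ω ∈ S.consistent t m)
    {z : ℝ} (hz : z ∈ Set.Ioc (0:ℝ) 1) (u : S.U) :
    -(S.γ * B) - S.amax / z ≤ sSup (NSE S ρ Λinf (σ t m) z u) := by
  set c := S.oc ω t (Fin.snoc m.2 u) with hcdef
  set s' := σ (t+1) (S.omem ω (t+1) (Fin.snoc m.2 u)) with hsdef
  have hp : ρ c s' (σ t m) u ≠ ⊥ := NSrho_mem_of_consistent hinfo hω u
  have hmem : c + S.γ * Λinf s' (S.γ * z) + (ρ c s' (σ t m) u).toReal / z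
      ∈ NSE S ρ Λinf (σ t m) z u := ⟨(c, s'), hp, rfl⟩
  have hbd : BddAbove (NSE S ρ Λinf (σ t m) z u) :=
    ⟨S.cmax + S.γ * B, fun x hx => NSE_bddAbove hρ hinfo hB t m hz u x hx⟩
  refine le_trans ?_ (le_csSup hbd hmem)
  have hc0 : 0 ≤ c := le_trans S.hcmin (NSoc_mem ω t _).1
  have hΛ := (abs_le.1 (hB s' (S.γ * z) (NSγz_mem hz))).1
  have hγΛ : S.γ * (-B) ≤ S.γ * Λinf s' (S.γ * z) :=
    mul_le_mul_of_nonneg_left hΛ S.hγ0.le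
  have hr := (NSrho_toReal_nonpos hρ hp).1
  have hdiv : -S.amax / z ≤ (ρ c s' (σ t m) u).toReal / z := by
    gcongr
    exact hz.1.le
  have h1 : -(S.amax / z) = -S.amax / z := (neg_div _ _).symm
  nlinarith [hγΛ, hdiv, hc0]

lemma NSE_nonempty {Ss : Type} {σ : (t : ℕ) → S.Mem t → Ss}
    {ρ : ℝ → Ss → Ss → S.U → EReal}
    (hinfo : ∀ (t : ℕ) (m : S.Mem t) (u : S.U) (c : ℝ) (s : Ss),
      S.rcs σ t c s m u = ρ c s (σ t m) u)
    {Λinf : Ss → ℝ → ℝ}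
    {t : ℕ} {m : S.Mem t} {ω : ℕ → S.W} (hω : ω ∈ S.consistent t m)
    (z : ℝ) (u : S.U) : (NSE S ρ Λinf (σ t m) z u).Nonempty :=
  ⟨_, ⟨(S.oc ω t (Fin.snoc m.2 u), σ (t+1) (S.omem ω (t+1) (Fin.snoc m.2 u))),
    NSrho_mem_of_consistent hinfo hω u, rfl⟩⟩

/-- The finite-horizon comparison function. -/
def NSPhi (S : Sys) {Ss : Type} (σ : (t : ℕ) → S.Mem t → Ss) (Λinf : Ss → ℝ → ℝ)
    (g : S.Strat) (y0 : S.Y) (t : ℕ) : ℝ :=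
  sSup ((fun ω => S.cA g ω t + S.γ ^ t * Λinf (σ t (S.memOf g ω t)) (S.γ ^ t)) ''
    {ω | S.memOf g ω 0 = S.mem0 y0})

lemma NSPhi_bddAbove {Ss : Type} (σ : (t : ℕ) → S.Mem t → Ss) {Λinf : Ss → ℝ → ℝ} {B : ℝ}
    (hB : ∀ s, ∀ z ∈ Set.Ioc (0:ℝ) 1, |Λinf s z| ≤ B) (hB0 : 0 ≤ B)
    (g : S.Strat) (y0 : S.Y) (t : ℕ) :
    ∀ x ∈ ((fun ω => S.cA g ω t + S.γ ^ t * Λinf (σ t (S.memOf g ω t)) (S.γ ^ t)) ''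
      {ω | S.memOf g ω 0 = S.mem0 y0}), x ≤ S.amax + B := by
  rintro x ⟨ω, hω, rfl⟩
  have h1 : S.cA g ω t ≤ S.amax := NScA_le g ω t
  have h2 := (abs_le.1 (hB (σ t (S.memOf g ω t)) (S.γ ^ t) (NSz_mem t))).2
  have h3 : S.γ ^ t * Λinf (σ t (S.memOf g ω t)) (S.γ ^ t) ≤ S.γ ^ t * B :=
    mul_le_mul_of_nonneg_left h2 (pow_nonneg S.hγ0.le t)
  have h4 : S.γ ^ t * B ≤ 1 * B :=
    mul_le_mul_of_nonneg_right (NSz_mem (S := S) t).2 hB0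
  show S.cA g ω t + S.γ ^ t * Λinf (σ t (S.memOf g ω t)) (S.γ ^ t) ≤ S.amax + B
  linarith

lemma NSomega_obs0 {g : S.Strat} {ω : ℕ → S.W} {y0 : S.Y} {t : ℕ} {m : S.Mem t}
    (hm : S.memOf g ω t = m) (hω0 : S.memOf g ω 0 = S.mem0 y0)
    {ω₂ : ℕ → S.W} (hω₂ : ω₂ ∈ S.consistent t m) :
    S.memOf g ω₂ 0 = S.mem0 y0 := by
  rw [NSmemOf_zero_iff]
  have h1 : S.h0 (ω₂ 0) = m.1 ⟨0, t.succ_pos⟩ :=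
    (NSomem_fst_zero ω₂ t m.2).symm.trans (congrFun (congrArg Prod.fst hω₂) ⟨0, t.succ_pos⟩)
  rw [h1, ← hm, NSmemOf_fst_zero]
  exact (NSmemOf_zero_iff g ω y0).1 hω0

lemma NScA_succ (g : S.Strat) (ω : ℕ → S.W) (t : ℕ) :
    S.cA g ω (t+1) = S.cA g ω t + S.γ ^ t * S.ccost g ω t :=
  Finset.sum_range_succ _ t

end AuxNS5

section AuxNS6

variable {S : Sys}

lemma NSstep_any {Ss : Type} {σ : (t : ℕ) → S.Mem t → Ss}
    {ρ : ℝ → Ss → Ss → S.U → EReal}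
    (hρ : ∀ c s' s u, ρ c s' s u = ⊥ ∨
      ∃ x : ℝ, ρ c s' s u = (x : EReal) ∧ x ∈ Set.Icc (-S.amax) 0)
    (hinfo : ∀ (t : ℕ) (m : S.Mem t) (u : S.U) (c : ℝ) (s : Ss),
      S.rcs σ t c s m u = ρ c s (σ t m) u)
    {Λinf : Ss → ℝ → ℝ} {B : ℝ}
    (hB : ∀ s, ∀ z ∈ Set.Ioc (0:ℝ) 1, |Λinf s z| ≤ B) (hB0 : 0 ≤ B)
    (hfix : ∀ s, ∀ z ∈ Set.Ioc (0:ℝ) 1, DPop S.γ ρ Λinf s z = Λinf s z)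
    (g : S.Strat) (y0 : S.Y) (hy : ∃ ω, S.memOf g ω 0 = S.mem0 y0) (t : ℕ) :
    NSPhi S σ Λinf g y0 t ≤ NSPhi S σ Λinf g y0 (t+1) := by
  obtain ⟨ω₀, hω₀⟩ := hy
  have hΩne : {ω : ℕ → S.W | S.memOf g ω 0 = S.mem0 y0}.Nonempty := ⟨ω₀, hω₀⟩
  refine le_of_forall_pos_le_add fun ε hε => ?_
  set δ := ε / 4 with hδdef
  have hδ : 0 < δ := by positivity
  -- choose ω nearly achieving Phi t
  obtain ⟨x, ⟨ω, hω0, rfl⟩, hx⟩ :=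
    exists_lt_of_lt_csSup (hΩne.image _)
      (sub_lt_self (NSPhi S σ Λinf g y0 t) hδ)
  set m := S.memOf g ω t with hmdef
  set z := S.γ ^ t with hzdef
  have hz : z ∈ Set.Ioc (0:ℝ) 1 := NSz_mem t
  set s := σ t m with hsdef
  set u := g t m with hudef
  have hωK : ω ∈ S.consistent t m := NSmem_consistent g ω t
  -- fixed point and inf bound
  have hbddE : ∀ u' : S.U, BddAbove (NSE S ρ Λinf s z u') := fun u' =>
    ⟨S.cmax + S.γ * B, fun x hx => NSE_bddAbove hρ hinfo hB t m hz u' x hx⟩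
  have hbb : BddBelow (Set.range fun u' : S.U => sSup (NSE S ρ Λinf s z u')) := by
    refine ⟨-(S.γ * B) - S.amax / z, ?_⟩
    rintro x ⟨u', rfl⟩
    exact NSE_lower_elt hρ hinfo hB hωK hz u'
  have hΛDP : Λinf s z ≤ sSup (NSE S ρ Λinf s z u) := by
    rw [← hfix s z hz, NSDPop_eq]
    exact csInf_le hbb ⟨u, rfl⟩
  -- choose a near-optimal pair in the support
  have hEne : (NSE S ρ Λinf s z u).Nonempty := NSE_nonempty hinfo hωK z u
  obtain ⟨x, ⟨p, hp, rfl⟩, hxp⟩ :=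
    exists_lt_of_lt_csSup hEne (sub_lt_self (sSup (NSE S ρ Λinf s z u)) hδ)
  set R := NSR S σ t m u p.1 p.2 with hRdef
  set Ab := NSAbar S t m with hAbdef
  have htr : (ρ p.1 p.2 s u).toReal = R - Ab := NSrho_toReal hinfo hp
  -- choose ω' nearly achieving R
  have hδz : 0 < δ * z := mul_pos hδ hz.1
  obtain ⟨ω', hω'restr, hω'A⟩ :=
    NSexists_near_R σ (NSrestr_nonempty_of_ne_bot hinfo hp) hδz
  have hω't : S.memOf g ω' t = m := NSconsist_closed g ω ω' t m rfl hω'restr.1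
  have hω'0 : S.memOf g ω' 0 = S.mem0 y0 := NSomega_obs0 rfl hω0 hω'restr.1
  -- value of ω' at time t+1
  have hval : S.cA g ω' (t+1) + S.γ ^ (t+1) *
      Λinf (σ (t+1) (S.memOf g ω' (t+1))) (S.γ ^ (t+1))
      = S.oA ω' t m.2 + z * p.1 + (S.γ * z) * Λinf p.2 (S.γ * z) := by
    have h1 : S.cA g ω' t = S.oA ω' t m.2 := by
      rw [NScA_oA, hω't]
    have h2 : S.ccost g ω' t = p.1 := by
      rw [NSccost_oc, hω't, ← hudef]
      exact hω'restr.2.1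
    have h3 : σ (t+1) (S.memOf g ω' (t+1)) = p.2 := by
      rw [NSmemOf_succ, hω't, ← hudef]
      exact hω'restr.2.2
    have h4 : S.γ ^ (t+1) = S.γ * z := by rw [hzdef, pow_succ]; ring
    rw [NScA_succ, h1, h2, h3, h4, ← hzdef]
  -- assemble
  have hAb : S.cA g ω t ≤ Ab := by
    rw [NScA_oA, ← hmdef]
    exact NSoA_le_Abar hωK
  have hΛp : Λinf s z < p.1 + S.γ * Λinf p.2 (S.γ * z) + (R - Ab) / z + δ := by
    rw [← htr]
    linarith
  have hzmul : z * ((R - Ab) / z) = R - Ab := by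
    rw [mul_comm]
    exact div_mul_cancel₀ _ hz.1.ne'
  have hmul : z * Λinf s z ≤ z * (p.1 + S.γ * Λinf p.2 (S.γ * z) + (R - Ab) / z + δ) :=
    mul_le_mul_of_nonneg_left hΛp.le hz.1.le
  have hexp : z * (p.1 + S.γ * Λinf p.2 (S.γ * z) + (R - Ab) / z + δ)
      = z * p.1 + (S.γ * z) * Λinf p.2 (S.γ * z) + (R - Ab) + z * δ := by
    rw [mul_add, mul_add, mul_add, hzmul]
    ring
  have hval_le : S.cA g ω' (t+1) + S.γ ^ (t+1) *
      Λinf (σ (t+1) (S.memOf g ω' (t+1))) (S.γ ^ (t+1)) ≤ NSPhi S σ Λinf g y0 (t+1) :=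
    le_csSup ⟨S.amax + B, fun x hx => NSPhi_bddAbove σ hB hB0 g y0 (t+1) x hx⟩
      ⟨ω', hω'0, rfl⟩
  have hz1 : z ≤ 1 := hz.2
  -- final chain
  have hoA' : R - δ * z < S.oA ω' t m.2 := hω'A
  rw [hval] at hval_le
  have hx' : NSPhi S σ Λinf g y0 t - δ < S.cA g ω t + z * Λinf s z := hx
  have hzd : δ * z ≤ δ := mul_le_of_le_one_right hδ.le hz1
  have hzd' : z * δ ≤ δ := by rw [mul_comm]; exact hzd
  linarith

end AuxNS6

section AuxNS7

variable {S : Sys}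

lemma NSstep_law {Ss : Type} {σ : (t : ℕ) → S.Mem t → Ss}
    {ρ : ℝ → Ss → Ss → S.U → EReal}
    (hρ : ∀ c s' s u, ρ c s' s u = ⊥ ∨
      ∃ x : ℝ, ρ c s' s u = (x : EReal) ∧ x ∈ Set.Icc (-S.amax) 0)
    (hinfo : ∀ (t : ℕ) (m : S.Mem t) (u : S.U) (c : ℝ) (s : Ss),
      S.rcs σ t c s m u = ρ c s (σ t m) u)
    {Λinf : Ss → ℝ → ℝ} {B : ℝ}
    (hB : ∀ s, ∀ z ∈ Set.Ioc (0:ℝ) 1, |Λinf s z| ≤ B) (hB0 : 0 ≤ B)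
    (hfix : ∀ s, ∀ z ∈ Set.Ioc (0:ℝ) 1, DPop S.γ ρ Λinf s z = Λinf s z)
    {π : Ss → ℝ → S.U}
    (hπ : ∀ s, ∀ z ∈ Set.Ioc (0:ℝ) 1, DPopLaw S.γ ρ π Λinf s z = DPop S.γ ρ Λinf s z)
    {gstar : S.Strat} (hg : ∀ t m, gstar t m = π (σ t m) (S.γ ^ t))
    (y0 : S.Y) (hy : ∃ ω, S.memOf gstar ω 0 = S.mem0 y0) (t : ℕ) :
    NSPhi S σ Λinf gstar y0 (t+1) ≤ NSPhi S σ Λinf gstar y0 t := by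
  obtain ⟨ω₀, hω₀⟩ := hy
  have hΩne : {ω : ℕ → S.W | S.memOf gstar ω 0 = S.mem0 y0}.Nonempty := ⟨ω₀, hω₀⟩
  refine le_of_forall_pos_le_add fun ε hε => ?_
  set δ := ε / 4 with hδdef
  have hδ : 0 < δ := by positivity
  -- choose ω nearly achieving Phi (t+1)
  obtain ⟨x, ⟨ω, hω0, rfl⟩, hx⟩ :=
    exists_lt_of_lt_csSup (hΩne.image _)
      (sub_lt_self (NSPhi S σ Λinf gstar y0 (t+1)) hδ)
  set m := S.memOf gstar ω t with hmdef
  set z := S.γ ^ t with hzdef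
  have hz : z ∈ Set.Ioc (0:ℝ) 1 := NSz_mem t
  set s := σ t m with hsdef
  have hu : gstar t m = π s z := hg t m
  set u := gstar t m with hudef
  have hωK : ω ∈ S.consistent t m := NSmem_consistent gstar ω t
  set c := S.oc ω t (Fin.snoc m.2 u) with hcdef
  set s'' := σ (t+1) (S.omem ω (t+1) (Fin.snoc m.2 u)) with hsdef2
  have hp : ρ c s'' s u ≠ ⊥ := NSrho_mem_of_consistent hinfo hωK u
  -- the law attains the fixed point
  have hlaw : sSup (NSE S ρ Λinf s z u) = Λinf s z := by
    rw [hu, ← NSDPopLaw_eq, hπ s z hz, hfix s z hz]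
  have hbddE : BddAbove (NSE S ρ Λinf s z u) :=
    ⟨S.cmax + S.γ * B, fun x hx => NSE_bddAbove hρ hinfo hB t m hz u x hx⟩
  have hkey : c + S.γ * Λinf s'' (S.γ * z) + (ρ c s'' s u).toReal / z ≤ Λinf s z := by
    rw [← hlaw]
    exact le_csSup hbddE ⟨(c, s''), hp, rfl⟩
  set R := NSR S σ t m u c s'' with hRdef
  set Ab := NSAbar S t m with hAbdef
  have htr : (ρ c s'' s u).toReal = R - Ab := NSrho_toReal hinfo hp
  have hωrestr : ω ∈ NSrestr S σ t m u c s'' := ⟨hωK, rfl, rfl⟩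
  have hoAR : S.oA ω t m.2 ≤ R := NSoA_le_R σ hωrestr
  -- value identity at ω for time t+1
  have hval : S.cA gstar ω (t+1) + S.γ ^ (t+1) *
      Λinf (σ (t+1) (S.memOf gstar ω (t+1))) (S.γ ^ (t+1))
      = S.oA ω t m.2 + z * c + (S.γ * z) * Λinf s'' (S.γ * z) := by
    have h1 : S.cA gstar ω t = S.oA ω t m.2 := by rw [NScA_oA, ← hmdef]
    have h2 : S.ccost gstar ω t = c := by rw [NSccost_oc, ← hmdef, ← hudef, ← hcdef]
    have h3 : σ (t+1) (S.memOf gstar ω (t+1)) = s'' := by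
      rw [NSmemOf_succ, ← hmdef, ← hudef, ← hsdef2]
    have h4 : S.γ ^ (t+1) = S.γ * z := by rw [hzdef, pow_succ]; ring
    rw [NScA_succ, h1, h2, h3, h4, ← hzdef]
  -- choose ω₂ nearly achieving Abar
  obtain ⟨ω₂, hω₂K, hω₂A⟩ := NSexists_near_Abar (⟨ω, hωK⟩ : (S.consistent t m).Nonempty) hδ
  have hω₂t : S.memOf gstar ω₂ t = m := NSconsist_closed gstar ω ω₂ t m rfl hω₂K
  have hω₂0 : S.memOf gstar ω₂ 0 = S.mem0 y0 := NSomega_obs0 rfl hω0 hω₂K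
  have hval2 : S.cA gstar ω₂ t + z * Λinf (σ t (S.memOf gstar ω₂ t)) z
      = S.oA ω₂ t m.2 + z * Λinf s z := by
    have h1 : S.cA gstar ω₂ t = S.oA ω₂ t m.2 := by rw [NScA_oA, hω₂t]
    rw [h1, hω₂t, ← hsdef]
  have hval2_le : S.cA gstar ω₂ t + z * Λinf (σ t (S.memOf gstar ω₂ t)) z
      ≤ NSPhi S σ Λinf gstar y0 t :=
    le_csSup ⟨S.amax + B, fun x hx => NSPhi_bddAbove σ hB hB0 gstar y0 t x hx⟩
      ⟨ω₂, hω₂0, rfl⟩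
  rw [hval2] at hval2_le
  -- beta-reduced near-optimality of ω
  have hx' : NSPhi S σ Λinf gstar y0 (t+1) - δ
      < S.cA gstar ω (t+1) + S.γ ^ (t+1) *
        Λinf (σ (t+1) (S.memOf gstar ω (t+1))) (S.γ ^ (t+1)) := hx
  rw [hval] at hx'
  -- multiply hkey by z
  have hmul : z * (c + S.γ * Λinf s'' (S.γ * z) + (ρ c s'' s u).toReal / z)
      ≤ z * Λinf s z := mul_le_mul_of_nonneg_left hkey hz.1.le
  have hzmul : z * ((ρ c s'' s u).toReal / z) = (ρ c s'' s u).toReal := by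
    rw [mul_comm]
    exact div_mul_cancel₀ _ hz.1.ne'
  have hexp : z * (c + S.γ * Λinf s'' (S.γ * z) + (ρ c s'' s u).toReal / z)
      = z * c + (S.γ * z) * Λinf s'' (S.γ * z) + (R - Ab) := by
    rw [mul_add, mul_add, hzmul, htr]
    ring
  rw [hexp] at hmul
  -- assemble: Phi(t+1) - δ < oA ω + z c + γzΛ ≤ oA ω + zΛs - (R - Ab)
  --           ≤ zΛs + Ab  (oA ω ≤ R) ; and Ab - δ < oA ω₂ ≤ Phi t - zΛs...
  linarith
end AuxNS7

section AuxNS8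

variable {S : Sys}

lemma NSPhi_zero {Ss : Type} (σ : (t : ℕ) → S.Mem t → Ss) (Λinf : Ss → ℝ → ℝ)
    (g : S.Strat) (y0 : S.Y) (hy : ∃ ω, S.memOf g ω 0 = S.mem0 y0) :
    NSPhi S σ Λinf g y0 0 = Λinf (σ 0 (S.mem0 y0)) 1 := by
  obtain ⟨ω₀, hω₀⟩ := hy
  have himg : (fun ω => S.cA g ω 0 + S.γ ^ 0 * Λinf (σ 0 (S.memOf g ω 0)) (S.γ ^ 0)) ''
      {ω | S.memOf g ω 0 = S.mem0 y0} = {Λinf (σ 0 (S.mem0 y0)) 1} := by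
    apply Set.eq_singleton_iff_nonempty_unique_mem.2
    refine ⟨⟨_, ⟨ω₀, hω₀, rfl⟩⟩, ?_⟩
    rintro x ⟨ω, hω, rfl⟩
    have h0 : S.cA g ω 0 = 0 := Finset.sum_range_zero _
    have hωm : S.memOf g ω 0 = S.mem0 y0 := hω
    show S.cA g ω 0 + S.γ ^ 0 * Λinf (σ 0 (S.memOf g ω 0)) (S.γ ^ 0) = _
    rw [h0, pow_zero, one_mul, zero_add, hωm]
  rw [NSPhi, himg, csSup_singleton]

end AuxNS8


theorem stmt10 (S : Sys) {Ss : Type} [Nonempty Ss] [MetricSpace Ss]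
    (hSb : Bornology.IsBounded (Set.univ : Set Ss))
    (σ : (t : ℕ) → S.Mem t → Ss) (ρ : ℝ → Ss → Ss → S.U → EReal)
    (hρ : ∀ c s' s u, ρ c s' s u = ⊥ ∨
      ∃ x : ℝ, ρ c s' s u = (x : EReal) ∧ x ∈ Set.Icc (-S.amax) 0)
    (hinfo : ∀ (t : ℕ) (m : S.Mem t) (u : S.U) (c : ℝ) (s : Ss),
      S.rcs σ t c s m u = ρ c s (σ t m) u)
    (Λinf : Ss → ℝ → ℝ)
    (hbd : ∃ B, ∀ s, ∀ z ∈ Set.Ioc (0:ℝ) 1, |Λinf s z| ≤ B)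
    (hfix : ∀ s, ∀ z ∈ Set.Ioc (0:ℝ) 1, DPop S.γ ρ Λinf s z = Λinf s z)
    (π : Ss → ℝ → S.U)
    (hπ : ∀ s, ∀ z ∈ Set.Ioc (0:ℝ) 1, DPopLaw S.γ ρ π Λinf s z = DPop S.γ ρ Λinf s z)
    (gstar : S.Strat) (hg : ∀ t m, gstar t m = π (σ t m) (S.γ ^ t))
    (y0 : S.Y) (hy : (S.consistent 0 (S.mem0 y0)).Nonempty) :
    S.V gstar 0 (S.mem0 y0) = S.Vopt 0 (S.mem0 y0) := by
  classical
  obtain ⟨B₀, hB₀⟩ := hbd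
  set B := max B₀ 0 with hBdef
  have hB : ∀ s, ∀ z ∈ Set.Ioc (0:ℝ) 1, |Λinf s z| ≤ B := fun s z hz =>
    (hB₀ s z hz).trans (le_max_left _ _)
  have hB0 : (0:ℝ) ≤ B := le_max_right _ _
  obtain ⟨ωy, hωy⟩ := hy
  have hωy' : S.h0 (ωy 0) = y0 := (NSconsistent_zero_iff ωy y0).1 hωy
  have hyg : ∀ g : S.Strat, ∃ ω, S.memOf g ω 0 = S.mem0 y0 := fun g =>
    ⟨ωy, (NSmemOf_zero_iff g ωy y0).2 hωy'⟩
  set L := Λinf (σ 0 (S.mem0 y0)) 1 with hLdef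
  -- monotonicity of the comparison functions
  have hmono : ∀ g : S.Strat, ∀ t, NSPhi S σ Λinf g y0 0 ≤ NSPhi S σ Λinf g y0 t := by
    intro g t
    induction t with
    | zero => exact le_refl _
    | succ t ih => exact ih.trans (NSstep_any hρ hinfo hB hB0 hfix g y0 (hyg g) t)
  have hmono' : ∀ t, NSPhi S σ Λinf gstar y0 t ≤ NSPhi S σ Λinf gstar y0 0 := by
    intro t
    induction t with
    | zero => exact le_refl _
    | succ t ih =>
      exact (NSstep_law hρ hinfo hB hB0 hfix hπ hg y0 (hyg gstar) t).trans ih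
  -- boundedness of the value images
  have hVbdd : ∀ g : S.Strat, BddAbove ((fun ω => S.cA g ω 0 + S.γ ^ 0 * S.cCinf g ω 0) ''
      {ω | S.memOf g ω 0 = S.mem0 y0}) := by
    intro g
    refine ⟨S.amax + S.amax, ?_⟩
    rintro x ⟨ω, hω, rfl⟩
    have h1 := NScA_le g ω 0
    have h2 := NScCinf_le g ω 0
    have h3 : S.γ ^ 0 * S.cCinf g ω 0 = S.cCinf g ω 0 := by rw [pow_zero, one_mul]
    show S.cA g ω 0 + S.γ ^ 0 * S.cCinf g ω 0 ≤ S.amax + S.amax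
    linarith
  -- lower sandwich: Phi_t ≤ V^g + γ^t B
  have hlower : ∀ g : S.Strat, ∀ t : ℕ,
      NSPhi S σ Λinf g y0 t ≤ S.V g 0 (S.mem0 y0) + S.γ ^ t * B := by
    intro g t
    obtain ⟨ω₁, hω₁⟩ := hyg g
    refine csSup_le ⟨_, ⟨ω₁, hω₁, rfl⟩⟩ ?_
    rintro x ⟨ω, hω, rfl⟩
    have hdec := NScCinf_decomp g ω t
    have hnn : 0 ≤ S.γ ^ t * S.cCinf g ω t :=
      mul_nonneg (pow_nonneg S.hγ0.le t) (NScCinf_nonneg g ω t)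
    have h3 : S.cCinf g ω 0 ≤ S.V g 0 (S.mem0 y0) := by
      have hmem := le_csSup (hVbdd g) ⟨ω, hω, rfl⟩
      have h0 : S.cA g ω 0 = 0 := Finset.sum_range_zero _
      rw [show ((fun ω => S.cA g ω 0 + S.γ ^ 0 * S.cCinf g ω 0) ω)
          = S.cA g ω 0 + S.γ ^ 0 * S.cCinf g ω 0 from rfl, h0, pow_zero, one_mul,
        zero_add] at hmem
      exact hmem
    have h4 : S.γ ^ t * Λinf (σ t (S.memOf g ω t)) (S.γ ^ t) ≤ S.γ ^ t * B :=
      mul_le_mul_of_nonneg_left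
        (abs_le.1 (hB (σ t (S.memOf g ω t)) (S.γ ^ t) (NSz_mem t))).2
        (pow_nonneg S.hγ0.le t)
    show S.cA g ω t + S.γ ^ t * Λinf (σ t (S.memOf g ω t)) (S.γ ^ t)
      ≤ S.V g 0 (S.mem0 y0) + S.γ ^ t * B
    linarith
  -- limit : L ≤ V^g for all g
  have hγlim : Filter.Tendsto (fun t : ℕ => S.γ ^ t) Filter.atTop (nhds 0) :=
    tendsto_pow_atTop_nhds_zero_of_lt_one S.hγ0.le S.hγ1
  have hLV : ∀ g : S.Strat, L ≤ S.V g 0 (S.mem0 y0) := by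
    intro g
    have h1 : ∀ t : ℕ, L ≤ S.V g 0 (S.mem0 y0) + S.γ ^ t * B := fun t =>
      calc L = NSPhi S σ Λinf g y0 0 := (NSPhi_zero σ Λinf g y0 (hyg g)).symm
        _ ≤ NSPhi S σ Λinf g y0 t := hmono g t
        _ ≤ S.V g 0 (S.mem0 y0) + S.γ ^ t * B := hlower g t
    have h2 : Filter.Tendsto (fun t : ℕ => S.V g 0 (S.mem0 y0) + S.γ ^ t * B)
        Filter.atTop (nhds (S.V g 0 (S.mem0 y0) + 0 * B)) :=
      Filter.Tendsto.add tendsto_const_nhds (hγlim.mul_const B)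
    have := ge_of_tendsto' h2 h1
    rwa [zero_mul, add_zero] at this
  -- upper sandwich : V^{g*} ≤ Phi_t + γ^t (B + amax)
  have hupper : ∀ t : ℕ, S.V gstar 0 (S.mem0 y0)
      ≤ NSPhi S σ Λinf gstar y0 t + S.γ ^ t * (B + S.amax) := by
    intro t
    obtain ⟨ω₁, hω₁⟩ := hyg gstar
    refine csSup_le ⟨_, ⟨ω₁, hω₁, rfl⟩⟩ ?_
    rintro x ⟨ω, hω, rfl⟩
    have h0 : S.cA gstar ω 0 = 0 := Finset.sum_range_zero _
    have hdec := NScCinf_decomp gstar ω t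
    have h1 : S.γ ^ t * S.cCinf gstar ω t ≤ S.γ ^ t * S.amax :=
      mul_le_mul_of_nonneg_left (NScCinf_le gstar ω t) (pow_nonneg S.hγ0.le t)
    have h2 : S.cA gstar ω t + S.γ ^ t * Λinf (σ t (S.memOf gstar ω t)) (S.γ ^ t)
        ≤ NSPhi S σ Λinf gstar y0 t :=
      le_csSup ⟨S.amax + B, fun x hx => NSPhi_bddAbove σ hB hB0 gstar y0 t x hx⟩
        ⟨ω, hω, rfl⟩
    have h3 : -(S.γ ^ t * B) ≤ S.γ ^ t * Λinf (σ t (S.memOf gstar ω t)) (S.γ ^ t) := by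
      have := (abs_le.1 (hB (σ t (S.memOf gstar ω t)) (S.γ ^ t) (NSz_mem t))).1
      have h' := mul_le_mul_of_nonneg_left this (pow_nonneg S.hγ0.le t)
      rw [mul_neg] at h'
      linarith
    have h4 : S.γ ^ t * (B + S.amax) = S.γ ^ t * B + S.γ ^ t * S.amax := mul_add _ _ _
    show S.cA gstar ω 0 + S.γ ^ 0 * S.cCinf gstar ω 0
      ≤ NSPhi S σ Λinf gstar y0 t + S.γ ^ t * (B + S.amax)
    rw [h0, pow_zero, one_mul, zero_add]
    linarith
  have hVL : S.V gstar 0 (S.mem0 y0) ≤ L := by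
    have h1 : ∀ t : ℕ, S.V gstar 0 (S.mem0 y0) ≤ L + S.γ ^ t * (B + S.amax) := fun t =>
      (hupper t).trans (add_le_add_left
        ((hmono' t).trans_eq (NSPhi_zero σ Λinf gstar y0 (hyg gstar))) _)
    have h2 : Filter.Tendsto (fun t : ℕ => L + S.γ ^ t * (B + S.amax))
        Filter.atTop (nhds (L + 0 * (B + S.amax))) :=
      Filter.Tendsto.add tendsto_const_nhds (hγlim.mul_const _)
    have h3 := ge_of_tendsto' h2 (fun t => h1 t)
    rwa [zero_mul, add_zero] at h3
  -- conclusion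
  have hgmem : gstar ∈ {g : S.Strat | ∃ ω, S.memOf g ω 0 = S.mem0 y0} := hyg gstar
  have hVnonneg : ∀ g : S.Strat, (0:ℝ) ≤ S.V g 0 (S.mem0 y0) := by
    intro g
    apply Real.sSup_nonneg
    rintro x ⟨ω, hω, rfl⟩
    have h1 := NScA_nonneg g ω 0
    have h2 := NScCinf_nonneg g ω 0
    have h3 : (0:ℝ) ≤ S.γ ^ 0 * S.cCinf g ω 0 :=
      mul_nonneg (pow_nonneg S.hγ0.le 0) h2
    show (0:ℝ) ≤ S.cA g ω 0 + S.γ ^ 0 * S.cCinf g ω 0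
    linarith
  refine le_antisymm ?_ ?_
  · refine le_csInf ⟨_, gstar, hgmem, rfl⟩ ?_
    rintro b ⟨g', _, rfl⟩
    exact hVL.trans (hLV g')
  · exact csInf_le ⟨0, by rintro x ⟨g', _, rfl⟩; exact hVnonneg g'⟩ ⟨gstar, hgmem, rfl⟩
end
end

section
/- In the problem with observable costs, the conditional accrued distribution reduces to the conditional indicator: for every t ∈ ℕ and all realizations c_t ∈ 𝒞, m_{t+1} ∈ 𝒨_{t+1}, m_t ∈ 𝒨_t, u_t ∈ 𝒰, it holds that r_t(c_t, m_{t+1} | m_t, u_t) = 𝕀(c_t, m_{t+1} | m_t, u_t). -/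
open Set Filter

noncomputable section

-- Auxiliary lemmas

/-- Any disturbance consistent with an observable-cost memory `m` yields the accrued cost
determined by the observed costs in `m`. -/
lemma oA_of_consistentO (S : Sys) (t : ℕ) (m : S.MemO t) (ω : ℕ → S.W)
    (h : ω ∈ S.consistentO t m) :
    S.oA ω t m.2.2 = ∑ ℓ : Fin t, S.γ ^ (ℓ : ℕ) * m.2.1 ℓ := by
  have h2 : (S.omemO ω t m.2.2).2.1 = m.2.1 := by rw [h]
  calc S.oA ω t m.2.2 = ∑ ℓ : Fin t, S.γ ^ (ℓ : ℕ) * (S.omemO ω t m.2.2).2.1 ℓ := rfl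
    _ = ∑ ℓ : Fin t, S.γ ^ (ℓ : ℕ) * m.2.1 ℓ := by rw [h2]

lemma oA_mem_Icc (S : Sys) (t : ℕ) (ω : ℕ → S.W) (υ : Fin t → S.U) :
    S.oA ω t υ ∈ Set.Icc 0 S.amax := by
  have hγ0 := S.hγ0
  have hγ1 := S.hγ1
  have h1γ : 0 < 1 - S.γ := by linarith
  have hcmax : 0 ≤ S.cmax := by
    have h := S.hcost 0 (fun _ => ω 0) (fun _ => Classical.arbitrary S.U)
    exact le_trans S.hcmin (le_trans h.1 h.2)
  constructor
  · apply Finset.sum_nonneg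
    intro ℓ _
    have hc := (S.hcost ℓ (fun i : Fin ((ℓ : ℕ)+1) => ω i)
      (fun j : Fin ((ℓ : ℕ) + 1) => υ ⟨j, by have := j.isLt; have := ℓ.isLt; omega⟩)).1
    have h0 : (0:ℝ) ≤ S.oc ω ℓ (fun j : Fin ((ℓ : ℕ) + 1) =>
        υ ⟨j, by have := j.isLt; have := ℓ.isLt; omega⟩) := le_trans S.hcmin hc
    positivity
  · have step : S.oA ω t υ ≤ ∑ ℓ : Fin t, S.γ ^ (ℓ : ℕ) * S.cmax := by
      apply Finset.sum_le_sum
      intro ℓ _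
      have hc := (S.hcost ℓ (fun i : Fin ((ℓ : ℕ)+1) => ω i)
        (fun j : Fin ((ℓ : ℕ) + 1) => υ ⟨j, by have := j.isLt; have := ℓ.isLt; omega⟩)).2
      exact mul_le_mul_of_nonneg_left hc (by positivity)
    have hgeom : ∑ ℓ : Fin t, S.γ ^ (ℓ : ℕ) ≤ 1 / (1 - S.γ) := by
      rw [Fin.sum_univ_eq_sum_range]
      have heq := geom_sum_eq (ne_of_lt hγ1) t
      have eq2 : (S.γ ^ t - 1) / (S.γ - 1) = (1 - S.γ ^ t) / (1 - S.γ) := by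
        rw [← neg_div_neg_eq]; congr 1 <;> ring
      rw [heq, eq2, div_le_div_iff₀ h1γ h1γ]
      have hpow : 0 ≤ S.γ ^ t := by positivity
      nlinarith
    calc S.oA ω t υ ≤ ∑ ℓ : Fin t, S.γ ^ (ℓ : ℕ) * S.cmax := step
      _ = (∑ ℓ : Fin t, S.γ ^ (ℓ : ℕ)) * S.cmax := by rw [Finset.sum_mul]
      _ ≤ (1 / (1 - S.γ)) * S.cmax := mul_le_mul_of_nonneg_right hgeom hcmax
      _ = S.amax := by rw [Sys.amax]; ring

theorem stmt11 (S : Sys) (t : ℕ) (c : ℝ) (m' : S.MemO (t+1)) (m : S.MemO t) (u : S.U) :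
    S.rObs t c m' m u = S.indObs t c m' m u := by
  classical
  rw [Sys.rObs, Sys.indObs]
  set A : ℝ := ∑ ℓ : Fin t, S.γ ^ (ℓ : ℕ) * m.2.1 ℓ with hA
  by_cases hex : ∃ ω ∈ S.consistentO t m,
      S.oc ω t (Fin.snoc m.2.2 u) = c ∧ S.omemO ω (t+1) (Fin.snoc m.2.2 u) = m'
  · rw [if_pos hex]
    obtain ⟨ω, hω, hc, hm'⟩ := hex
    have hAω : S.oA ω t m.2.2 = A := oA_of_consistentO S t m ω hω
    have hIcc : A ∈ Set.Icc 0 S.amax := hAω ▸ oA_mem_Icc S t ω m.2.2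
    have hset1 : {a | a ∈ Set.Icc 0 S.amax ∧ ∃ ω ∈ S.consistentO t m,
        S.oc ω t (Fin.snoc m.2.2 u) = c ∧ S.omemO ω (t+1) (Fin.snoc m.2.2 u) = m' ∧
        S.oA ω t m.2.2 = a} = {A} := by
      ext a
      constructor
      · rintro ⟨_, ω', hω', _, _, ha⟩
        simp only [Set.mem_singleton_iff, ← ha]
        exact oA_of_consistentO S t m ω' hω'
      · rintro rfl
        exact ⟨hIcc, ω, hω, hc, hm', hAω⟩
    have hset2 : {a | a ∈ Set.Icc 0 S.amax ∧ ∃ ω ∈ S.consistentO t m,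
        S.oA ω t m.2.2 = a} = {A} := by
      ext a
      constructor
      · rintro ⟨_, ω', hω', ha⟩
        simp only [Set.mem_singleton_iff, ← ha]
        exact oA_of_consistentO S t m ω' hω'
      · rintro rfl
        exact ⟨hIcc, ω, hω, hAω⟩
    rw [hset1, hset2]
    simp only [Set.image_singleton, sSup_singleton]
    rw [← EReal.coe_sub, sub_self, EReal.coe_zero]
  · rw [if_neg hex]
    have hset1 : {a | a ∈ Set.Icc 0 S.amax ∧ ∃ ω ∈ S.consistentO t m,
        S.oc ω t (Fin.snoc m.2.2 u) = c ∧ S.omemO ω (t+1) (Fin.snoc m.2.2 u) = m' ∧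
        S.oA ω t m.2.2 = a} = ∅ := by
      ext a
      simp only [Set.mem_setOf_eq, Set.mem_empty_iff_false, iff_false]
      rintro ⟨_, ω', hω', hc, hm', _⟩
      exact hex ⟨ω', hω', hc, hm'⟩
    rw [hset1]
    simp [EReal.bot_sub]
end
end

section
/- In the problem with observable costs, let S̄_t = σ̄_t(M_t) be an information state for observable costs and let Λ̄^n be the n-th iterate of the operator 𝒯̄ starting from Λ̄^0 ≡ 0. Then for every finite horizon T ∈ ℕ, every t = 0, …, T and every realization m_t of the memory: J_t(m_t; T) = γ^t · Λ̄^{T−t+1}(σ̄_t(m_t)) + sup_{a_t ∈ [[A_t | m_t]]} a_t. -/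
open Set Filter

noncomputable section

section Aux

variable (S : Sys)

lemma Sys.cmin_le_cmax : S.cmin ≤ S.cmax := by
  obtain ⟨w⟩ := S.hW
  obtain ⟨u⟩ := S.hU
  have := S.hcost 0 (fun _ => w) (fun _ => u)
  exact le_trans this.1 this.2

lemma Sys.cmax_nonneg : 0 ≤ S.cmax := le_trans S.hcmin S.cmin_le_cmax

/-- accrued cost determined by the memory -/
def Sys.aConst (t : ℕ) (m : S.MemO t) : ℝ := ∑ ℓ : Fin t, S.γ ^ (ℓ : ℕ) * m.2.1 ℓ

lemma Sys.oA_of_consistentO {t : ℕ} {m : S.MemO t} {ω : ℕ → S.W}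
    (hω : ω ∈ S.consistentO t m) : S.oA ω t m.2.2 = S.aConst t m := by
  have h2 : (S.omemO ω t m.2.2).2.1 = m.2.1 := by rw [hω]
  have : S.oA ω t m.2.2 = ∑ ℓ : Fin t, S.γ ^ (ℓ : ℕ) * (S.omemO ω t m.2.2).2.1 ℓ := rfl
  rw [this, h2]; rfl

lemma Sys.sSup_ArangeO {t : ℕ} {m : S.MemO t} (hm : (S.consistentO t m).Nonempty) :
    sSup (S.ArangeO t m) = S.aConst t m := by
  have : S.ArangeO t m = {S.aConst t m} := by
    apply Set.eq_singleton_iff_nonempty_unique_mem.2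
    constructor
    · exact hm.image _
    · rintro a ⟨ω, hω, rfl⟩
      exact S.oA_of_consistentO hω
  rw [this, csSup_singleton]

lemma Sys.oA_snoc (ω : ℕ → S.W) (t : ℕ) (υ : Fin t → S.U) (u : S.U) :
    S.oA ω (t+1) (Fin.snoc υ u) = S.oA ω t υ + S.γ ^ t * S.oc ω t (Fin.snoc υ u) := by
  unfold Sys.oA
  rw [Fin.sum_univ_castSucc]
  simp only [Fin.coe_castSucc, Fin.val_last]
  congr 1
  apply Finset.sum_congr rfl
  intro i _
  have haux : ∀ (f g : Fin ((i : ℕ)+1) → S.U), f = g →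
      S.γ ^ (i : ℕ) * S.oc ω (i : ℕ) f = S.γ ^ (i : ℕ) * S.oc ω (i : ℕ) g :=
    fun f g h => by rw [h]
  apply haux
  funext j
  have hj : (j : ℕ) < t := by omega
  exact Fin.snoc_castSucc (α := fun _ : Fin (t+1) => S.U) u υ ⟨(j : ℕ), hj⟩

lemma Sys.mem_consistentO_next {t : ℕ} {m : S.MemO t} {ω : ℕ → S.W}
    (u : S.U) :
    ω ∈ S.consistentO (t+1) (S.omemO ω (t+1) (Fin.snoc m.2.2 u)) := rfl

lemma sSup_affine (a r : ℝ) (hr : 0 < r) (s : Set ℝ) (hne : s.Nonempty) (hbdd : BddAbove s) :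
    sSup ((fun x => a + r * x) '' s) = a + r * sSup s := by
  have hmono : Monotone (fun x : ℝ => a + r * x) := fun x y hxy => by
    dsimp; nlinarith
  exact (hmono.map_csSup_of_continuousAt (by fun_prop) hne hbdd).symm

lemma sInf_affine (a r : ℝ) (hr : 0 < r) (s : Set ℝ) (hne : s.Nonempty) (hbdd : BddBelow s) :
    sInf ((fun x => a + r * x) '' s) = a + r * sInf s := by
  have hmono : Monotone (fun x : ℝ => a + r * x) := fun x y hxy => by
    dsimp; nlinarith
  exact (hmono.map_csInf_of_continuousAt (by fun_prop) hne hbdd).symm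

end Aux

section Main

variable (S : Sys) {Sb : Type} [Nonempty Sb]
variable (σ : (t : ℕ) → S.MemO t → Sb) (F : Sb → S.U → Set (ℝ × Sb))

/-- bound `U = cmax/(1-γ)` -/
lemma iterBounds
    (hinfo : ∀ (t : ℕ) (m : S.MemO t) (u : S.U), S.CSrange σ t m u = F (σ t m) u) :
    ∀ n (t : ℕ) (m : S.MemO t), (S.consistentO t m).Nonempty →
      0 ≤ DPopBIter S.γ F n (σ t m) ∧
      DPopBIter S.γ F n (σ t m) ≤ S.cmax / (1 - S.γ) := by
  have hγ0 := S.hγ0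
  have hγ1 := S.hγ1
  have h1γ : 0 < 1 - S.γ := by linarith
  have hU0 : 0 ≤ S.cmax / (1 - S.γ) := div_nonneg S.cmax_nonneg h1γ.le
  intro n
  induction n with
  | zero => intro t m _; simpa [DPopBIter] using hU0
  | succ n ih =>
    intro t m hm
    have key : ∀ u : S.U,
        ((fun p : ℝ × Sb => p.1 + S.γ * DPopBIter S.γ F n p.2) '' F (σ t m) u) =
        (fun ω => S.oc ω t (Fin.snoc m.2.2 u) +
          S.γ * DPopBIter S.γ F n (σ (t+1) (S.omemO ω (t+1) (Fin.snoc m.2.2 u)))) ''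
          S.consistentO t m := by
      intro u
      rw [← hinfo t m u, Sys.CSrange, Set.image_image]
    have hmem : ∀ u (ω : ℕ → S.W), ω ∈ S.consistentO t m →
        0 ≤ S.oc ω t (Fin.snoc m.2.2 u) +
          S.γ * DPopBIter S.γ F n (σ (t+1) (S.omemO ω (t+1) (Fin.snoc m.2.2 u))) ∧
        S.oc ω t (Fin.snoc m.2.2 u) +
          S.γ * DPopBIter S.γ F n (σ (t+1) (S.omemO ω (t+1) (Fin.snoc m.2.2 u))) ≤
          S.cmax / (1 - S.γ) := by
      intro u ω hω
      have hc := S.hcost t (fun i : Fin (t+1) => ω i) (Fin.snoc m.2.2 u)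
      have hΛ := ih (t+1) (S.omemO ω (t+1) (Fin.snoc m.2.2 u))
        ⟨ω, S.mem_consistentO_next u⟩
      have hc0 : 0 ≤ S.oc ω t (Fin.snoc m.2.2 u) := le_trans S.hcmin hc.1
      have hc1 : S.oc ω t (Fin.snoc m.2.2 u) ≤ S.cmax := hc.2
      constructor
      · nlinarith [hΛ.1]
      · have : S.cmax + S.γ * (S.cmax / (1 - S.γ)) = S.cmax / (1 - S.γ) := by
          field_simp; ring
        nlinarith [hΛ.2]
    have hbdd : ∀ u : S.U, BddAbove
        ((fun p : ℝ × Sb => p.1 + S.γ * DPopBIter S.γ F n p.2) '' F (σ t m) u) := by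
      intro u
      rw [key u]
      exact ⟨S.cmax / (1 - S.γ), by rintro x ⟨ω, hω, rfl⟩; exact (hmem u ω hω).2⟩
    have hsup : ∀ u : S.U,
        0 ≤ sSup ((fun p : ℝ × Sb => p.1 + S.γ * DPopBIter S.γ F n p.2) '' F (σ t m) u) ∧
        sSup ((fun p : ℝ × Sb => p.1 + S.γ * DPopBIter S.γ F n p.2) '' F (σ t m) u) ≤
          S.cmax / (1 - S.γ) := by
      intro u
      obtain ⟨ω0, hω0⟩ := hm
      constructor
      · refine le_trans (hmem u ω0 hω0).1 (le_csSup (hbdd u) ?_)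
        rw [key u]; exact ⟨ω0, hω0, rfl⟩
      · apply csSup_le
        · rw [key u]; exact ⟨_, ⟨ω0, hω0, rfl⟩⟩
        · rw [key u]; rintro x ⟨ω, hω, rfl⟩; exact (hmem u ω hω).2
    constructor
    · apply le_csInf ⟨_, Set.mem_range_self (Classical.arbitrary S.U)⟩
      rintro x ⟨u, rfl⟩; exact (hsup u).1
    · refine le_trans (csInf_le ⟨0, ?_⟩ (Set.mem_range_self (Classical.arbitrary S.U)))
        (hsup (Classical.arbitrary S.U)).2
      rintro x ⟨u, rfl⟩; exact (hsup u).1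

lemma mainLemma
    (hinfo : ∀ (t : ℕ) (m : S.MemO t) (u : S.U), S.CSrange σ t m u = F (σ t m) u) :
    ∀ n (t : ℕ) (m : S.MemO t), (S.consistentO t m).Nonempty →
      S.JoptO n t m =
        S.γ ^ t * DPopBIter S.γ F (n + 1) (σ t m) + sSup (S.ArangeO t m) := by
  have hγ0 := S.hγ0
  have hγ1 := S.hγ1
  have hγt : ∀ t : ℕ, (0:ℝ) < S.γ ^ t := fun t => pow_pos hγ0 t
  intro n
  induction n with
  | zero =>
    intro t m hm
    -- per u: image rewrite
    have key : ∀ u : S.U,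
        ((fun ω => S.oA ω t m.2.2 + S.γ ^ t * S.oc ω t (Fin.snoc m.2.2 u)) ''
          S.consistentO t m) =
        (fun x => S.aConst t m + S.γ ^ t * x) ''
          ((fun ω => S.oc ω t (Fin.snoc m.2.2 u)) '' S.consistentO t m) := by
      intro u
      rw [Set.image_image]
      apply Set.image_congr
      intro ω hω
      rw [S.oA_of_consistentO hω]
    have key2 : ∀ u : S.U,
        ((fun p : ℝ × Sb => p.1 + S.γ * (fun _ => (0:ℝ)) p.2) '' F (σ t m) u) =
        (fun ω => S.oc ω t (Fin.snoc m.2.2 u)) '' S.consistentO t m := by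
      intro u
      rw [← hinfo t m u, Sys.CSrange, Set.image_image]
      simp
    have hbdd : ∀ u : S.U, BddAbove ((fun ω => S.oc ω t (Fin.snoc m.2.2 u)) ''
        S.consistentO t m) := by
      intro u
      refine ⟨S.cmax, ?_⟩
      rintro x ⟨ω, hω, rfl⟩
      exact (S.hcost t _ _).2
    have hper : ∀ u : S.U,
        sSup ((fun ω => S.oA ω t m.2.2 + S.γ ^ t * S.oc ω t (Fin.snoc m.2.2 u)) ''
          S.consistentO t m) =
        S.aConst t m + S.γ ^ t *
          sSup ((fun ω => S.oc ω t (Fin.snoc m.2.2 u)) '' S.consistentO t m) := by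
      intro u
      rw [key u, sSup_affine _ _ (hγt t) _ (hm.image _) (hbdd u)]
    have hlb : ∀ u : S.U, S.cmin ≤
        sSup ((fun ω => S.oc ω t (Fin.snoc m.2.2 u)) '' S.consistentO t m) := by
      intro u
      obtain ⟨ω0, hω0⟩ := hm
      refine le_trans (S.hcost t (fun i : Fin (t+1) => ω0 i) (Fin.snoc m.2.2 u)).1
        (le_csSup (hbdd u) ⟨ω0, hω0, rfl⟩)
    rw [S.sSup_ArangeO hm]
    show sInf (Set.range fun u : S.U =>
        sSup ((fun ω => S.oA ω t m.2.2 + S.γ ^ t * S.oc ω t (Fin.snoc m.2.2 u)) ''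
          S.consistentO t m)) = _
    have : (fun u : S.U =>
        sSup ((fun ω => S.oA ω t m.2.2 + S.γ ^ t * S.oc ω t (Fin.snoc m.2.2 u)) ''
          S.consistentO t m)) =
        (fun x => S.aConst t m + S.γ ^ t * x) ∘ (fun u : S.U =>
          sSup ((fun ω => S.oc ω t (Fin.snoc m.2.2 u)) '' S.consistentO t m)) := by
      funext u; exact hper u
    rw [this, Set.range_comp,
      sInf_affine _ _ (hγt t) _ (Set.range_nonempty _)
        ⟨S.cmin, by rintro x ⟨u, rfl⟩; exact hlb u⟩]
    have hrhs : DPopBIter S.γ F (0 + 1) (σ t m) =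
        sInf (Set.range fun u : S.U =>
          sSup ((fun ω => S.oc ω t (Fin.snoc m.2.2 u)) '' S.consistentO t m)) := by
      show DPopB S.γ F (fun _ => 0) (σ t m) = _
      unfold DPopB
      exact congrArg sInf (congrArg Set.range (funext fun u => congrArg sSup (key2 u)))
    rw [hrhs]; ring
  | succ n ih =>
    intro t m hm
    set Λ := DPopBIter S.γ F (n + 1) with hΛ
    have hUb := iterBounds S σ F hinfo (n+1)
    simp only [← hΛ] at hUb
    -- inner pointwise rewrite
    have hptw : ∀ u : S.U, ∀ ω ∈ S.consistentO t m,
        S.JoptO n (t+1) (S.omemO ω (t+1) (Fin.snoc m.2.2 u)) =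
        S.aConst t m + S.γ ^ t * (S.oc ω t (Fin.snoc m.2.2 u) +
          S.γ * Λ (σ (t+1) (S.omemO ω (t+1) (Fin.snoc m.2.2 u)))) := by
      intro u ω hω
      have hne' : (S.consistentO (t+1) (S.omemO ω (t+1) (Fin.snoc m.2.2 u))).Nonempty :=
        ⟨ω, S.mem_consistentO_next u⟩
      rw [ih (t+1) _ hne', S.sSup_ArangeO hne',
        ← S.oA_of_consistentO (S.mem_consistentO_next (m := m) u)]
      show S.γ ^ (t+1) * Λ _ + S.oA ω (t+1) (Fin.snoc m.2.2 u) = _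
      rw [S.oA_snoc, S.oA_of_consistentO hω, pow_succ]
      ring
    have key : ∀ u : S.U,
        ((fun ω => S.JoptO n (t+1) (S.omemO ω (t+1) (Fin.snoc m.2.2 u))) ''
          S.consistentO t m) =
        (fun x => S.aConst t m + S.γ ^ t * x) ''
          ((fun ω => S.oc ω t (Fin.snoc m.2.2 u) +
            S.γ * Λ (σ (t+1) (S.omemO ω (t+1) (Fin.snoc m.2.2 u)))) ''
            S.consistentO t m) := by
      intro u
      rw [Set.image_image]
      apply Set.image_congr
      intro ω hω
      exact hptw u ω hω
    have key2 : ∀ u : S.U,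
        ((fun p : ℝ × Sb => p.1 + S.γ * Λ p.2) '' F (σ t m) u) =
        (fun ω => S.oc ω t (Fin.snoc m.2.2 u) +
          S.γ * Λ (σ (t+1) (S.omemO ω (t+1) (Fin.snoc m.2.2 u)))) '' S.consistentO t m := by
      intro u
      rw [← hinfo t m u, Sys.CSrange, Set.image_image]
    have hmemb : ∀ u : S.U, ∀ ω ∈ S.consistentO t m,
        0 ≤ S.oc ω t (Fin.snoc m.2.2 u) +
          S.γ * Λ (σ (t+1) (S.omemO ω (t+1) (Fin.snoc m.2.2 u))) ∧
        S.oc ω t (Fin.snoc m.2.2 u) +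
          S.γ * Λ (σ (t+1) (S.omemO ω (t+1) (Fin.snoc m.2.2 u))) ≤
          S.cmax + S.γ * (S.cmax / (1 - S.γ)) := by
      intro u ω hω
      have hc := S.hcost t (fun i : Fin (t+1) => ω i) (Fin.snoc m.2.2 u)
      have hb := hUb (t+1) (S.omemO ω (t+1) (Fin.snoc m.2.2 u)) ⟨ω, S.mem_consistentO_next u⟩
      have hc0 : 0 ≤ S.oc ω t (Fin.snoc m.2.2 u) := le_trans S.hcmin hc.1
      have hc1 : S.oc ω t (Fin.snoc m.2.2 u) ≤ S.cmax := hc.2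
      constructor
      · nlinarith [hb.1]
      · nlinarith [hb.2, hc1]
    have hbdd : ∀ u : S.U, BddAbove
        ((fun ω => S.oc ω t (Fin.snoc m.2.2 u) +
          S.γ * Λ (σ (t+1) (S.omemO ω (t+1) (Fin.snoc m.2.2 u)))) '' S.consistentO t m) := by
      intro u
      exact ⟨_, by rintro x ⟨ω, hω, rfl⟩; exact (hmemb u ω hω).2⟩
    have hper : ∀ u : S.U,
        sSup ((fun ω => S.JoptO n (t+1) (S.omemO ω (t+1) (Fin.snoc m.2.2 u))) ''
          S.consistentO t m) =
        S.aConst t m + S.γ ^ t *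
          sSup ((fun ω => S.oc ω t (Fin.snoc m.2.2 u) +
            S.γ * Λ (σ (t+1) (S.omemO ω (t+1) (Fin.snoc m.2.2 u)))) '' S.consistentO t m) := by
      intro u
      rw [key u, sSup_affine _ _ (hγt t) _ (hm.image _) (hbdd u)]
    have hlb : ∀ u : S.U, (0:ℝ) ≤
        sSup ((fun ω => S.oc ω t (Fin.snoc m.2.2 u) +
          S.γ * Λ (σ (t+1) (S.omemO ω (t+1) (Fin.snoc m.2.2 u)))) '' S.consistentO t m) := by
      intro u
      obtain ⟨ω0, hω0⟩ := hm
      exact le_trans (hmemb u ω0 hω0).1 (le_csSup (hbdd u) ⟨ω0, hω0, rfl⟩)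
    rw [S.sSup_ArangeO hm]
    show sInf (Set.range fun u : S.U =>
        sSup ((fun ω => S.JoptO n (t+1) (S.omemO ω (t+1) (Fin.snoc m.2.2 u))) ''
          S.consistentO t m)) = _
    have heq : (fun u : S.U =>
        sSup ((fun ω => S.JoptO n (t+1) (S.omemO ω (t+1) (Fin.snoc m.2.2 u))) ''
          S.consistentO t m)) =
        (fun x => S.aConst t m + S.γ ^ t * x) ∘ (fun u : S.U =>
          sSup ((fun ω => S.oc ω t (Fin.snoc m.2.2 u) +
            S.γ * Λ (σ (t+1) (S.omemO ω (t+1) (Fin.snoc m.2.2 u)))) '' S.consistentO t m)) := by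
      funext u; exact hper u
    rw [heq, Set.range_comp,
      sInf_affine _ _ (hγt t) _ (Set.range_nonempty _)
        ⟨0, by rintro x ⟨u, rfl⟩; exact hlb u⟩]
    have hrhs : DPopBIter S.γ F (n + 1 + 1) (σ t m) =
        sInf (Set.range fun u : S.U =>
          sSup ((fun ω => S.oc ω t (Fin.snoc m.2.2 u) +
            S.γ * Λ (σ (t+1) (S.omemO ω (t+1) (Fin.snoc m.2.2 u)))) '' S.consistentO t m)) := by
      show DPopB S.γ F Λ (σ t m) = _
      unfold DPopB
      exact congrArg sInf (congrArg Set.range (funext fun u => congrArg sSup (key2 u)))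
    rw [hrhs]; ring

end Main

theorem stmt12 (S : Sys) {Sb : Type} [Nonempty Sb] [MetricSpace Sb]
    (hSb : Bornology.IsBounded (Set.univ : Set Sb))
    (σ : (t : ℕ) → S.MemO t → Sb) (F : Sb → S.U → Set (ℝ × Sb))
    (hinfo : ∀ (t : ℕ) (m : S.MemO t) (u : S.U), S.CSrange σ t m u = F (σ t m) u)
    (T t : ℕ) (ht : t ≤ T) (m : S.MemO t) (hm : (S.consistentO t m).Nonempty) :
    S.JoptO (T - t) t m =
      S.γ ^ t * DPopBIter S.γ F (T - t + 1) (σ t m) + sSup (S.ArangeO t m) := by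
  exact mainLemma S σ F hinfo (T - t) t m hm
end
end
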